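/- arXiv:math/0512144 — 7 statements merged into one kernel-verified Lean document; each statement's English description precedes it below -/
import Mathlib

section
/- Let G be an edge-colored graph and suppose P = u_1 u_2 … u_l u_{l+1} is a heterochromatic path of maximum length in G. If there exists an index x with 3 ≤ x ≤ l such that u_1 u_x is an edge of G whose color does not belong to C(P), then the color C(u_{x−1} u_x) does not belong to the set CN(u_{l+1}) \ {C(u_1 u_{l+1}), C(u_2 u_{l+1}), …, C(u_{l−1} u_{l+1})} (where only those u_i u_{l+1} that are actually edges of G contribute colors). Equivalently, every edge incident with u_{l+1} whose color equals C(u_{x−1} u_x) joins u_{l+1} to one of u_1, …, u_{l−1}. -/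
open SimpleGraph

namespace MyAux
variable {V : Type*} {G : SimpleGraph V}

/-- The walk consisting of the first `n` darts of a walk. -/
def wtake {u v : V} (p : G.Walk u v) (n : ℕ) : G.Walk u (p.getVert n) :=
  match p, n with
  | .nil, _ => .nil
  | .cons h q, 0 => Walk.nil.copy rfl (Walk.getVert_zero (Walk.cons h q)).symm
  | .cons h q, (n + 1) => (Walk.cons h (wtake q n)).copy rfl (Walk.getVert_cons_succ _ h).symm

lemma wtake_edges {u v : V} (p : G.Walk u v) (n : ℕ) :
    (wtake p n).edges = p.edges.take n := by
  induction p generalizing n with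
  | nil => simp [wtake]
  | cons h q ih =>
    cases n with
    | zero => simp [wtake]
    | succ n => simp [wtake, ih]

lemma wtake_support {u v : V} (p : G.Walk u v) (n : ℕ) :
    (wtake p n).support = p.support.take (n + 1) := by
  induction p generalizing n with
  | nil => simp [wtake]
  | cons h q ih =>
    cases n with
    | zero => simp [wtake]
    | succ n => simp [wtake, ih]

lemma wtake_length {u v : V} (p : G.Walk u v) (n : ℕ) :
    (wtake p n).length = min n p.length := by
  induction p generalizing n with
  | nil => simp [wtake]
  | cons h q ih =>
    cases n with
    | zero => simp [wtake]
    | succ n => simp [wtake, ih, Nat.succ_min_succ]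

lemma drop_edges {u v : V} (p : G.Walk u v) (n : ℕ) :
    (p.drop n).edges = p.edges.drop n := by
  induction p generalizing n with
  | nil => simp [Walk.drop]
  | cons h q ih =>
    cases n with
    | zero => simp [Walk.drop]
    | succ n => simp [Walk.drop, ih]

lemma drop_support {u v : V} (p : G.Walk u v) (n : ℕ) (hn : n ≤ p.length) :
    (p.drop n).support = p.support.drop n := by
  induction p generalizing n with
  | nil => simp at hn; simp [hn, Walk.drop]
  | cons h q ih =>
    cases n with
    | zero => simp [Walk.drop]
    | succ n => simp only [Walk.length_cons] at hn
                simp [Walk.drop, ih n (by omega)]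

lemma drop_length {u v : V} (p : G.Walk u v) (n : ℕ) :
    (p.drop n).length = p.length - n := by
  induction p generalizing n with
  | nil => simp [Walk.drop]
  | cons h q ih =>
    cases n with
    | zero => simp [Walk.drop]
    | succ n => simp [Walk.drop, ih]

lemma edges_drop_cons {u v : V} (p : G.Walk u v) (n : ℕ) (hn : n < p.length) :
    p.edges.drop n = s(p.getVert n, p.getVert (n + 1)) :: p.edges.drop (n + 1) := by
  induction p generalizing n with
  | nil => simp at hn
  | cons h q ih =>
    cases n with
    | zero => simp
    | succ n =>
      simp only [Walk.length_cons] at hn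
      simp [ih n (by omega)]

end MyAux

open MyAux

/-- A walk in an edge-colored graph is a *heterochromatic path* if it is a path
and no two of its edges have the same color. -/
def Heterochromatic {V : Type*} (G : SimpleGraph V) (C : Sym2 V → ℕ) {u v : V}
    (p : G.Walk u v) : Prop :=
  p.IsPath ∧ (p.edges.map C).Nodup

/-- The *color neighborhood* of a vertex: the set of colors appearing on edges
incident with it. -/
def colorNbhd {V : Type*} (G : SimpleGraph V) (C : Sym2 V → ℕ) (v : V) : Set ℕ :=
  {c | ∃ w, G.Adj v w ∧ C s(v, w) = c}

/-- Lemma 2.2: Let `P = u₁u₂…u_l u_{l+1}` be a longest heterochromatic path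
(here `uᵢ = p.getVert (i-1)`, `u₁ = u`, `u_{l+1} = w`).  If there is an `x` with
`3 ≤ x ≤ l` such that `u₁uₓ` is an edge whose color is not in `C(P)`, then
`C(u_{x-1}uₓ)` does not belong to
`CN(u_{l+1}) \ {C(uᵢu_{l+1}) : 1 ≤ i ≤ l-1, uᵢu_{l+1} ∈ E(G)}`. -/
theorem stmt1 {V : Type*} (G : SimpleGraph V) (C : Sym2 V → ℕ) {u w : V} (l : ℕ)
    (p : G.Walk u w) (hlen : p.length = l)
    (hhet : Heterochromatic G C p)
    (hmax : ∀ (a b : V) (q : G.Walk a b), Heterochromatic G C q → q.length ≤ l)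
    (x : ℕ) (hx3 : 3 ≤ x) (hxl : x ≤ l)
    (hadj : G.Adj u (p.getVert (x - 1)))
    (hnotin : C s(u, p.getVert (x - 1)) ∉ p.edges.map C) :
    C s(p.getVert (x - 2), p.getVert (x - 1)) ∉
      colorNbhd G C w \
        {c | ∃ i, 1 ≤ i ∧ i ≤ l - 1 ∧ G.Adj (p.getVert (i - 1)) w ∧
          C s(p.getVert (i - 1), w) = c} := by
  classical
  obtain ⟨y, rfl⟩ : ∃ y, x = y + 2 := ⟨x - 2, by omega⟩
  have hy1 : 1 ≤ y := by omega
  have hyl : y + 2 ≤ l := hxl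
  have h21 : y + 2 - 1 = y + 1 := rfl
  have h22 : y + 2 - 2 = y := rfl
  rw [h21] at hadj hnotin
  rw [h21, h22]
  set a := p.getVert (y + 1) with ha
  set b := p.getVert y with hb
  rintro ⟨⟨v, hwv, hCv⟩, hnot⟩
  -- hCv : C s(w, v) = C s(b, a)
  have hplen : p.length = l := hlen
  have hedl : p.edges.length = l := by rw [Walk.length_edges, hplen]
  -- decomposition of the edges of p
  have h2 := edges_drop_cons p y (by omega)
  have hM : p.edges = p.edges.take y ++ s(b, a) :: p.edges.drop (y + 1) := by
    conv_lhs => rw [← List.take_append_drop y p.edges]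
    rw [h2]
  have hMC : p.edges.map C =
      (p.edges.take y).map C ++ C s(b, a) :: (p.edges.drop (y + 1)).map C := by
    conv_lhs => rw [hM]
    simp
  -- C s(b,a) is not a color of the tail of p after the edge (b,a)
  have hcb_tail : C s(b, a) ∉ (p.edges.drop (y + 1)).map C := by
    have hnd := hhet.2
    rw [hMC] at hnd
    have := (List.nodup_append.mp hnd).2.1
    exact (List.nodup_cons.mp this).1
  have hcb_mem : C s(b, a) ∈ p.edges.map C := by rw [hMC]; simp
  -- v is not on p
  have hvnot : v ∉ p.support := by
    intro hv
    obtain ⟨n, hn, hnle⟩ := Walk.mem_support_iff_exists_getVert.mp hv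
    rw [hplen] at hnle
    by_cases hn2 : n ≤ l - 2
    · exact hnot ⟨n + 1, by omega, by omega, by
        simpa [hn] using hwv.symm, by rw [Nat.add_sub_cancel, hn, Sym2.eq_swap]; exact hCv⟩
    · by_cases hnl : n = l
      · apply G.irrefl (v := w)
        have : p.getVert n = w := by rw [← hplen] at hnl; rw [hnl, Walk.getVert_length]
        rw [hn] at this
        rwa [this] at hwv
      · -- n = l - 1, so s(v, w) is the last edge of p
        have hnl1 : n = l - 1 := by omega
        subst hnl1
        have hlast := edges_drop_cons p (l - 1) (by omega)
        have hgl : p.getVert (l - 1 + 1) = w := by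
          have : l - 1 + 1 = l := by omega
          rw [this, ← hplen, Walk.getVert_length]
        rw [hgl, hn] at hlast
        have hmem : s(v, w) ∈ p.edges.drop (y + 1) := by
          have h1 : s(v, w) ∈ p.edges.drop (l - 1) := by rw [hlast]; exact List.mem_cons_self
          have h2 : p.edges.drop (l - 1) = (p.edges.drop (y + 1)).drop (l - 1 - (y + 1)) := by
            rw [List.drop_drop]
            congr 1
            omega
          rw [h2] at h1
          exact List.mem_of_mem_drop h1
        apply hcb_tail
        rw [← hCv, Sym2.eq_swap]
        exact List.mem_map_of_mem (f := C) hmem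
  -- the longer heterochromatic path
  let q : G.Walk b v :=
    (wtake p y).reverse.append ((Walk.cons hadj (p.drop (y + 1))).append (Walk.cons hwv Walk.nil))
  have hqlen : q.length = l + 1 := by
    simp only [q, Walk.length_append, Walk.length_reverse, wtake_length, drop_length,
      Walk.length_cons, Walk.length_nil, hplen]
    omega
  have hqsupp : q.support = (p.support.take (y + 1)).reverse ++ (p.support.drop (y + 1) ++ [v]) := by
    simp only [q, Walk.support_append, Walk.support_reverse, wtake_support,
      drop_support p (y + 1) (by omega), Walk.support_cons, Walk.support_nil,
      List.tail_cons, List.cons_append, List.nil_append]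
  have hqedges : q.edges =
      (p.edges.take y).reverse ++ (s(u, a) :: (p.edges.drop (y + 1) ++ [s(w, v)])) := by
    simp only [q, Walk.edges_append, Walk.edges_reverse, wtake_edges, drop_edges,
      Walk.edges_cons, Walk.edges_nil, List.cons_append, List.nil_append, List.append_assoc]
  -- q is a path
  have hqpath : q.IsPath := by
    have hperm : ((p.support.take (y + 1)).reverse ++ (p.support.drop (y + 1) ++ [v])).Perm
        (p.support ++ [v]) := by
      refine ((List.reverse_perm _).append_right _).trans (List.Perm.of_eq ?_)
      rw [← List.append_assoc, List.take_append_drop]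
    rw [Walk.isPath_def, hqsupp, hperm.nodup_iff, List.nodup_append]
    exact ⟨hhet.1.support_nodup, List.nodup_singleton _, by
      intro a' ha' b' hb'; rw [List.mem_singleton] at hb'; subst hb'; exact fun h => hvnot (h ▸ ha')⟩
  -- q is heterochromatic
  have hqcolors : (q.edges.map C).Nodup := by
    have hE : q.edges.map C =
        ((p.edges.take y).map C).reverse ++
          (C s(u, a) :: ((p.edges.drop (y + 1)).map C ++ [C s(b, a)])) := by
      rw [hqedges]
      simp only [List.map_append, List.map_reverse, List.map_cons, List.map_nil]
      rw [hCv]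
    have inner : (C s(u, a) :: ((p.edges.drop (y + 1)).map C ++ [C s(b, a)])).Perm
        (C s(b, a) :: ((p.edges.drop (y + 1)).map C ++ [C s(u, a)])) :=
      (((List.perm_append_singleton _ _).cons _).trans (List.Perm.swap _ _ _)).trans
        (((List.perm_append_singleton _ _).symm).cons _)
    have hperm : (q.edges.map C).Perm ((p.edges.map C) ++ [C s(u, a)]) := by
      rw [hE, hMC]
      refine ((List.reverse_perm _).append_right _).trans
        (((inner).append_left _).trans (List.Perm.of_eq ?_))
      simp [List.append_assoc]
    rw [hperm.nodup_iff, List.nodup_append]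
    exact ⟨hhet.2, List.nodup_singleton _, by
      intro a' ha' b' hb'; rw [List.mem_singleton] at hb'; subst hb'; exact fun h => hnotin (h ▸ ha')⟩
  have := hmax _ _ q ⟨hqpath, hqcolors⟩
  rw [hqlen] at this
  omega
end

section
/- Let G be an edge-colored graph, let P = u_1 u_2 … u_l u_{l+1} be a heterochromatic path of maximum length in G, and let v be a vertex not on P such that u_{l+1} v is an edge with C(u_{l+1} v) = C(u_1 u_2). If there exists an index x with 2 ≤ x ≤ l − 2 such that u_x v and u_{x+2} v are both edges of G whose two colors are distinct and both lie outside C(P), then neither C(u_x u_{x+1}) nor C(u_{x+1} u_{x+2}) belongs to the set CN(u_{l+1}) \ {C(u_1 u_{l+1}), C(u_2 u_{l+1}), …, C(u_{l−1} u_{l+1})} (where only those u_i u_{l+1} that are actually edges of G contribute colors). -/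
open SimpleGraph

namespace SimpleGraph.Walk
variable {V : Type*} {G : SimpleGraph V}

/-- The walk consisting of the first `n` darts of a walk. -/
def take' : ∀ {u v : V} (p : G.Walk u v) (n : ℕ), G.Walk u (p.getVert n)
  | _, _, .nil, _ => .nil
  | _, _, .cons _ _, 0 => Walk.nil
  | _, _, .cons h q, n + 1 => .cons h (take' q n)

lemma take'_append_drop : ∀ {u v : V} (p : G.Walk u v) (n : ℕ),
    (p.take' n).append (p.drop n) = p
  | _, _, .nil, n => by
      cases n <;> rfl
  | _, _, .cons h q, 0 => by
      simp [take', drop]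
      rfl
  | _, _, .cons h q, n + 1 => by
      have := take'_append_drop q n
      exact congrArg (cons h) this

lemma length_take' : ∀ {u v : V} (p : G.Walk u v) {n : ℕ}, n ≤ p.length →
    (p.take' n).length = n
  | _, _, .nil, n, h => by simp_all [take']
  | _, _, .cons h q, 0, _ => by rfl
  | _, _, .cons h q, n + 1, hn => by
      exact congrArg (· + 1) (length_take' q (by simpa using hn))

lemma getVert_drop' : ∀ {u v : V} (p : G.Walk u v) (n i : ℕ),
    (p.drop n).getVert i = p.getVert (n + i)
  | _, _, p, n, i => drop_getVert p n i

lemma length_drop' : ∀ {u v : V} (p : G.Walk u v) (n : ℕ),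
    (p.drop n).length = p.length - n
  | _, _, p, n => drop_length p n

lemma getVert_take' : ∀ {u v : V} (p : G.Walk u v) {n i : ℕ}, i ≤ n →
    (p.take' n).getVert i = p.getVert i
  | _, _, .nil, n, i, h => by cases n <;> simp [take', getVert]
  | _, _, .cons h q, 0, i, hi => by
      simp only [Nat.le_zero] at hi
      subst hi; rfl
  | _, _, .cons h q, n + 1, 0, _ => by rfl
  | _, _, .cons h q, n + 1, i + 1, hi => by
      exact getVert_take' q (by omega)

lemma getVert_injOn' {u v : V} {p : G.Walk u v} (hp : p.IsPath) :
    ∀ {i j : ℕ}, i ≤ p.length → j ≤ p.length → p.getVert i = p.getVert j → i = j := by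
  induction p with
  | nil => intro i j hi hj _; simp at hi hj; omega
  | cons h q ih =>
    intro i j hi hj hij
    rw [cons_isPath_iff] at hp
    match i, j with
    | 0, 0 => rfl
    | 0, j + 1 =>
      exfalso
      apply hp.2
      rw [mem_support_iff_exists_getVert]
      exact ⟨j, by simpa using hij.symm, by simpa using hj⟩
    | i + 1, 0 =>
      exfalso
      apply hp.2
      rw [mem_support_iff_exists_getVert]
      exact ⟨i, by simpa using hij, by simpa using hi⟩
    | i + 1, j + 1 =>
      have := ih hp.1 (by simpa using hi) (by simpa using hj) (by simpa using hij)
      omega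

lemma edge_getVert_mem : ∀ {u v : V} (p : G.Walk u v) {i : ℕ}, i < p.length →
    s(p.getVert i, p.getVert (i + 1)) ∈ p.edges
  | _, _, .nil, i, h => by simp at h
  | _, _, .cons h q, 0, _ => by
      cases q <;> simp [getVert, edges_cons]
  | _, _, .cons h q, i + 1, hi => by
      simp only [getVert_cons_succ, edges_cons, List.mem_cons]
      exact Or.inr (edge_getVert_mem q (by simpa using hi))

lemma edges_take'_two {u v : V} (p : G.Walk u v) (h : 2 ≤ p.length) :
    (p.take' 2).edges = [s(p.getVert 0, p.getVert 1), s(p.getVert 1, p.getVert 2)] := by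
  match p with
  | .nil => simp at h
  | .cons h₁ .nil => simp at h
  | .cons h₁ (.cons h₂ q) =>
    cases q <;> simp [take', getVert, edges_cons]

end SimpleGraph.Walk

open SimpleGraph.Walk

/-- Lemma 2.3: Let `P = u₁u₂…u_l u_{l+1}` be a longest heterochromatic path
(here `uᵢ = p.getVert (i-1)`, `u₁ = u`, `u_{l+1} = w`), and let `v ∉ P` be a
vertex with `u_{l+1}v ∈ E(G)` and `C(u_{l+1}v) = C(u₁u₂)`.  If there is an `x`
with `2 ≤ x ≤ l-2` such that `uₓv` and `u_{x+2}v` are edges with two distinct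
colors both outside `C(P)`, then neither `C(uₓu_{x+1})` nor `C(u_{x+1}u_{x+2})`
belongs to `CN(u_{l+1}) \ {C(uᵢu_{l+1}) : 1 ≤ i ≤ l-1, uᵢu_{l+1} ∈ E(G)}`. -/
theorem stmt2 {V : Type*} (G : SimpleGraph V) (C : Sym2 V → ℕ) {u w : V} (l : ℕ)
    (p : G.Walk u w) (hlen : p.length = l)
    (hhet : Heterochromatic G C p)
    (hmax : ∀ (a b : V) (q : G.Walk a b), Heterochromatic G C q → q.length ≤ l)
    (v : V) (hv : v ∉ p.support) (hadj : G.Adj w v)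
    (hcol : C s(w, v) = C s(u, p.getVert 1))
    (x : ℕ) (hx2 : 2 ≤ x) (hxl : x ≤ l - 2)
    (hax : G.Adj (p.getVert (x - 1)) v) (hax2 : G.Adj (p.getVert (x + 1)) v)
    (hne : C s(p.getVert (x - 1), v) ≠ C s(p.getVert (x + 1), v))
    (hc1 : C s(p.getVert (x - 1), v) ∉ p.edges.map C)
    (hc2 : C s(p.getVert (x + 1), v) ∉ p.edges.map C) :
    C s(p.getVert (x - 1), p.getVert x) ∉
      colorNbhd G C w \
        {c | ∃ i, 1 ≤ i ∧ i ≤ l - 1 ∧ G.Adj (p.getVert (i - 1)) w ∧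
          C s(p.getVert (i - 1), w) = c} ∧
    C s(p.getVert x, p.getVert (x + 1)) ∉
      colorNbhd G C w \
        {c | ∃ i, 1 ≤ i ∧ i ≤ l - 1 ∧ G.Adj (p.getVert (i - 1)) w ∧
          C s(p.getVert (i - 1), w) = c} := by
  obtain ⟨hpath, hnodupC⟩ := hhet
  have hl4 : 4 ≤ l := by omega
  have hinj : ∀ {i j : ℕ}, i ≤ p.length → j ≤ p.length →
      p.getVert i = p.getVert j → i = j := fun hi hj => getVert_injOn' hpath hi hj
  have hCinj : ∀ {i j : ℕ}, i < l → j < l →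
      C s(p.getVert i, p.getVert (i + 1)) = C s(p.getVert j, p.getVert (j + 1)) → i = j := by
    intro i j hi hj hCij
    have hei := p.edge_getVert_mem (show i < p.length by omega)
    have hej := p.edge_getVert_mem (show j < p.length by omega)
    have h2 := List.inj_on_of_nodup_map hnodupC hei hej hCij
    rw [Sym2.eq_iff] at h2
    rcases h2 with ⟨h1, _⟩ | ⟨h1, h2⟩
    · exact hinj (by omega) (by omega) h1
    · have e1 := hinj (by omega) (by omega) h1
      have e2 := hinj (by omega) (by omega) h2
      omega
  -- the pieces of the path
  set q1 := p.take' (x - 1) with hq1def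
  set r := p.drop (x - 1) with hrdef
  set m2 := r.take' 2 with hm2def
  set q2 := r.drop 2 with hq2def
  have hpq : q1.append r = p := p.take'_append_drop (x - 1)
  have hrm : m2.append q2 = r := r.take'_append_drop 2
  have hrlen : r.length = l - (x - 1) := by rw [hrdef, length_drop', hlen]
  have hq1len : q1.length = x - 1 := length_take' p (by omega)
  have hq2len : q2.length = l - x - 1 := by rw [hq2def, length_drop', hrlen]; omega
  have hrget : ∀ i, r.getVert i = p.getVert (x - 1 + i) := getVert_drop' p (x - 1)
  have hq2get : ∀ i, q2.getVert i = p.getVert (x + 1 + i) := by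
    intro i
    rw [hq2def, getVert_drop' r 2 i, hrget, show x - 1 + (2 + i) = x + 1 + i from by omega]
  have ex1 : x - 1 + 1 = x := by omega
  have ex2 : x - 1 + 2 = x + 1 := by omega
  have hm2edges : m2.edges =
      [s(p.getVert (x - 1), p.getVert x), s(p.getVert x, p.getVert (x + 1))] := by
    rw [hm2def, edges_take'_two r (by omega), hrget 0, hrget 1, hrget 2]
    rw [show x - 1 + 0 = x - 1 from by omega, ex1, ex2]
  have hpedges : p.edges = q1.edges ++ (m2.edges ++ q2.edges) := by
    conv_lhs => rw [← hpq, ← hrm]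
    rw [edges_append, edges_append]
  have hq1path : q1.IsPath := by
    have h := hpath; rw [← hpq] at h; exact h.of_append_left
  have hrpath : r.IsPath := by
    have h := hpath; rw [← hpq] at h; exact h.of_append_right
  have hq2path : q2.IsPath := by
    have h := hrpath; rw [← hrm] at h; exact h.of_append_right
  have hq1mem : ∀ a ∈ q1.support, ∃ i, i ≤ x - 1 ∧ p.getVert i = a := by
    intro a ha
    rw [mem_support_iff_exists_getVert] at ha
    obtain ⟨i, hia, hil⟩ := ha
    rw [hq1len] at hil
    exact ⟨i, hil, by rw [← getVert_take' p hil]; exact hia⟩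
  have hq2mem : ∀ a ∈ q2.support, ∃ j, x + 1 ≤ j ∧ j ≤ l ∧ p.getVert j = a := by
    intro a ha
    rw [mem_support_iff_exists_getVert] at ha
    obtain ⟨i, hia, hil⟩ := ha
    rw [hq2len] at hil
    exact ⟨x + 1 + i, by omega, by omega, by rw [← hq2get i]; exact hia⟩
  have hq1subp : ∀ a ∈ q1.support, a ∈ p.support := by
    intro a ha
    obtain ⟨i, hi, hia⟩ := hq1mem a ha
    rw [mem_support_iff_exists_getVert]
    exact ⟨i, hia, by omega⟩
  have hq2subp : ∀ a ∈ q2.support, a ∈ p.support := by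
    intro a ha
    obtain ⟨j, _, hj, hja⟩ := hq2mem a ha
    rw [mem_support_iff_exists_getVert]
    exact ⟨j, hja, by omega⟩
  have hq12disj : ∀ a ∈ q1.support, a ∉ q2.support := by
    intro a ha1 ha2
    obtain ⟨i, hi, hia⟩ := hq1mem a ha1
    obtain ⟨j, hj1, hj2, hja⟩ := hq2mem a ha2
    have := hinj (show i ≤ p.length by omega) (show j ≤ p.length by omega)
      (hia.trans hja.symm)
    omega
  -- the key claim
  have key : ∀ k, k = x - 1 ∨ k = x →
      C s(p.getVert k, p.getVert (k + 1)) ∉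
        colorNbhd G C w \
          {c | ∃ i, 1 ≤ i ∧ i ≤ l - 1 ∧ G.Adj (p.getVert (i - 1)) w ∧
            C s(p.getVert (i - 1), w) = c} := by
    rintro k hk ⟨⟨z, hwz, hCz⟩, hnS⟩
    have hkx : 1 ≤ k ∧ k + 1 ≤ l - 1 := by omega
    have hcmem_m2 : C s(p.getVert k, p.getVert (k + 1)) ∈ m2.edges.map C := by
      rw [hm2edges]
      rcases hk with rfl | rfl
      · rw [ex1]; simp
      · simp
    by_cases hzp : z ∈ p.support
    · rw [mem_support_iff_exists_getVert] at hzp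
      obtain ⟨j, hj, hjl⟩ := hzp
      rw [hlen] at hjl
      rcases show j ≤ l - 2 ∨ j = l - 1 ∨ j = l by omega with hj2 | hj2 | hj2
      · refine hnS ⟨j + 1, by omega, by omega, ?_, ?_⟩
        · rw [Nat.add_sub_cancel, hj]; exact hwz.symm
        · rw [Nat.add_sub_cancel, hj, Sym2.eq_swap]; exact hCz
      · subst hj2
        have hwl : p.getVert l = w := by rw [← hlen]; exact p.getVert_length
        have : C s(p.getVert (l - 1), p.getVert (l - 1 + 1)) =
            C s(p.getVert k, p.getVert (k + 1)) := by
          rw [show l - 1 + 1 = l from by omega, hwl, hj, Sym2.eq_swap]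
          exact hCz
        have := hCinj (by omega) (by omega) this
        omega
      · subst hj2
        rw [← hlen] at hj
        rw [p.getVert_length] at hj
        exact hwz.ne' hj.symm
    · by_cases hzv : z = v
      · subst hzv
        have h0 : C s(p.getVert 0, p.getVert (0 + 1)) =
            C s(p.getVert k, p.getVert (k + 1)) := by
          rw [p.getVert_zero, zero_add, ← hcol]
          exact hCz
        have := hCinj (by omega) (by omega) h0
        omega
      · -- construct a longer heterochromatic path
        have hq2get2 : r.getVert 2 = p.getVert (x + 1) := by
          rw [hrget 2, ex2]
        have hq2end : q2 = q2 := rfl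
        let q2' : G.Walk (p.getVert (x + 1)) w := (q2.copy hq2get2 rfl)
        let Q : G.Walk u z :=
          ((q1.concat hax).append (Walk.cons hax2.symm q2')).concat hwz
        have hQlen : Q.length = l + 1 := by
          simp only [Q, length_concat, length_append, length_cons, q2', length_copy,
            hq1len, hq2len]
          omega
        have hQsupp : Q.support = ((q1.support ++ [v]) ++ q2.support) ++ [z] := by
          simp only [Q, support_concat, support_append, support_cons, q2', support_copy,
            List.concat_eq_append, List.tail_cons]
        have hQedges : Q.edges =
            ((q1.edges ++ [s(p.getVert (x - 1), v)]) ++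
              (s(v, p.getVert (x + 1)) :: q2.edges)) ++ [s(w, z)] := by
          simp only [Q, edges_concat, edges_append, edges_cons, q2', edges_copy,
            List.concat_eq_append]
        -- color facts
        rw [hpedges, List.map_append, List.map_append, List.nodup_append,
          List.nodup_append] at hnodupC
        obtain ⟨hA, ⟨hB, hD, hBD⟩, hABD⟩ := hnodupC
        rw [hpedges, List.map_append, List.map_append, List.mem_append,
          List.mem_append] at hc1 hc2
        push_neg at hc1 hc2
        have hczB : C s(w, z) ∈ m2.edges.map C := by rw [hCz]; exact hcmem_m2
        have hczA : C s(w, z) ∉ q1.edges.map C := by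
          intro h; exact hABD _ h _ (List.mem_append_left _ hczB) rfl
        have hczD : C s(w, z) ∉ q2.edges.map C := fun h => hBD _ hczB _ h rfl
        have hc1cz : C s(p.getVert (x - 1), v) ≠ C s(w, z) := by
          intro h; exact hc1.2.1 (h ▸ hczB)
        have hc2cz : C s(p.getVert (x + 1), v) ≠ C s(w, z) := by
          intro h; exact hc2.2.1 (h ▸ hczB)
        have hQhet : Heterochromatic G C Q := by
          constructor
          · rw [isPath_def, hQsupp]
            have hnd1 : q1.support.Nodup := hq1path.support_nodup
            have hnd2 : q2.support.Nodup := hq2path.support_nodup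
            have hvq1 : v ∉ q1.support := fun h => hv (hq1subp v h)
            have hvq2 : v ∉ q2.support := fun h => hv (hq2subp v h)
            have hzq1 : z ∉ q1.support := fun h => hzp (hq1subp z h)
            have hzq2 : z ∉ q2.support := fun h => hzp (hq2subp z h)
            rw [List.nodup_append, List.nodup_append, List.nodup_append]
            refine ⟨⟨⟨hnd1, List.nodup_singleton v, ?_⟩, hnd2, ?_⟩,
              List.nodup_singleton z, ?_⟩
            · intro a ha b hav hab
              subst hab
              rw [List.mem_singleton] at hav
              exact hvq1 (hav ▸ ha)
            · intro a ha b ha2 hab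
              subst hab
              rw [List.mem_append] at ha
              rcases ha with ha | ha
              · exact hq12disj a ha ha2
              · rw [List.mem_singleton] at ha
                exact hvq2 (ha ▸ ha2)
            · intro a ha b haz hab
              subst hab
              rw [List.mem_singleton] at haz
              subst haz
              rw [List.mem_append, List.mem_append] at ha
              rcases ha with (ha | ha) | ha
              · exact hzq1 ha
              · rw [List.mem_singleton] at ha; exact hzv ha
              · exact hzq2 ha
          · rw [hQedges]
            simp only [List.map_append, List.map_cons, List.map_nil, List.map_singleton]
            rw [List.nodup_append, List.nodup_append, List.nodup_append]
            have hc2' : C s(v, p.getVert (x + 1)) = C s(p.getVert (x + 1), v) := by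
              rw [Sym2.eq_swap]
            refine ⟨⟨⟨hA, List.nodup_singleton _, ?_⟩, ?_, ?_⟩,
              List.nodup_singleton _, ?_⟩
            · intro a ha b hav hab
              subst hab
              rw [List.mem_singleton] at hav
              exact hc1.1 (hav ▸ ha)
            · rw [List.nodup_cons]
              refine ⟨?_, hD⟩
              rw [hc2']
              exact hc2.2.2
            · intro a ha b ha2 hab
              subst hab
              rw [List.mem_append] at ha
              rw [List.mem_cons] at ha2
              rcases ha with ha | ha
              · rcases ha2 with ha2 | ha2
                · rw [hc2'] at ha2
                  exact hc2.1 (ha2 ▸ ha)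
                · exact hABD _ ha _ (List.mem_append_right _ ha2) rfl
              · rw [List.mem_singleton] at ha
                subst ha
                rcases ha2 with ha2 | ha2
                · rw [hc2'] at ha2
                  exact hne ha2
                · exact hc1.2.2 ha2
            · intro a ha b haz hab
              subst hab
              rw [List.mem_singleton] at haz
              subst haz
              simp only [List.mem_append, List.mem_cons, List.mem_singleton,
                List.not_mem_nil, or_false] at ha
              rcases ha with (ha | ha) | ha | ha
              · exact hczA ha
              · exact hc1cz ha.symm
              · rw [hc2'] at ha
                exact hc2cz ha.symm
              · exact hczD ha
        have := hmax u z Q hQhet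
        omega
  refine ⟨?_, key x (Or.inr rfl)⟩
  have := key (x - 1) (Or.inl rfl)
  rwa [ex1] at this
end

section
/- Let G be an edge-colored graph and let P = u_1 u_2 … u_l u_{l+1} v_1 be a path in G such that: (a) u_1 u_2 … u_{l+1} is a heterochromatic path of maximum length in G; and (b) C(u_{l+1} v_1) = C(u_{j_0} u_{j_0+1}) for some index 1 ≤ j_0 ≤ l, where j_0 is as small as possible over all configurations satisfying (a); that is, for every heterochromatic path w_1 w_2 … w_{l+1} of maximum length in G, every vertex w not on that path with w_{l+1} w an edge of G, and every index j with C(w_{l+1} w) = C(w_j w_{j+1}), one has j ≥ j_0. Then for every x with j_0 + 1 ≤ x ≤ 2 j_0 (and x ≤ l + 1), if u_1 u_x is an edge of G then C(u_1 u_x) ∈ C(P'), where P' denotes the heterochromatic path u_1 u_2 … u_{l+1}. -/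
open SimpleGraph

section Aux

variable {V : Type*} {G : SimpleGraph V}


/-- The walk consisting of the first `n` darts of `p`. -/
def myTake {u v : V} : (p : G.Walk u v) → (n : ℕ) → G.Walk u (p.getVert n)
  | .nil, _ => .nil
  | .cons _ _, 0 => .nil
  | .cons h q, (n + 1) => Walk.cons h (myTake q n)

lemma myTake_length {u v : V} (p : G.Walk u v) (n : ℕ) (hn : n ≤ p.length) :
    (myTake p n).length = n := by
  induction p generalizing n with
  | nil => simp at hn; simp [hn, myTake]
  | cons h q ih =>
    cases n with
    | zero => rfl
    | succ n => simpa [myTake] using ih n (by simpa using hn)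

lemma myTake_edges {u v : V} (p : G.Walk u v) (n : ℕ) :
    (myTake p n).edges = p.edges.take n := by
  induction p generalizing n with
  | nil => simp [myTake]
  | cons h q ih =>
    cases n with
    | zero => rfl
    | succ n => simp [myTake, ih]

lemma myTake_support {u v : V} (p : G.Walk u v) (n : ℕ) :
    (myTake p n).support = p.support.take (n + 1) := by
  induction p generalizing n with
  | nil => simp [myTake]
  | cons h q ih =>
    cases n with
    | zero => rfl
    | succ n => simp [myTake, ih]

lemma myTake_getVert {u v : V} (p : G.Walk u v) (n i : ℕ) :
    (myTake p n).getVert i = p.getVert (min i n) := by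
  induction p generalizing n i with
  | nil => simp [myTake, Walk.getVert]
  | cons h q ih =>
    cases n with
    | zero => cases i <;> simp [myTake, Walk.getVert]
    | succ n =>
      cases i with
      | zero => simp [myTake, Walk.getVert]
      | succ i =>
        simp only [myTake, Walk.getVert_cons_succ, ih, Nat.succ_min_succ]

lemma drop_length' {u v : V} (p : G.Walk u v) (n : ℕ) :
    (p.drop n).length = p.length - n := by
  induction p generalizing n with
  | nil => simp [Walk.drop]
  | cons h q ih =>
    cases n with
    | zero => simp [Walk.drop]
    | succ n => simpa [Walk.drop] using ih n

lemma drop_edges' {u v : V} (p : G.Walk u v) (n : ℕ) :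
    (p.drop n).edges = p.edges.drop n := by
  induction p generalizing n with
  | nil => simp [Walk.drop]
  | cons h q ih =>
    cases n with
    | zero => simp [Walk.drop]
    | succ n => simpa [Walk.drop] using ih n

lemma drop_support' {u v : V} (p : G.Walk u v) (n : ℕ) (hn : n ≤ p.length) :
    (p.drop n).support = p.support.drop n := by
  induction p generalizing n with
  | nil => simp at hn; simp [hn, Walk.drop]
  | cons h q ih =>
    cases n with
    | zero => simp [Walk.drop]
    | succ n => simpa [Walk.drop] using ih n (by simpa using hn)

lemma myTake_append_drop {u v : V} (p : G.Walk u v) (n : ℕ) :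
    (myTake p n).append (p.drop n) = p := by
  induction p generalizing n with
  | nil => cases n <;> rfl
  | cons h q ih =>
    cases n with
    | zero => simp [myTake, Walk.drop, Walk.copy_rfl_rfl]; rfl
    | succ n => simp [myTake, Walk.drop, Walk.copy_rfl_rfl, ih]

lemma edges_getElem' {u v : V} (p : G.Walk u v) (i : ℕ) (h : i < p.edges.length) :
    p.edges[i] = s(p.getVert i, p.getVert (i + 1)) := by
  induction p generalizing i with
  | nil => simp at h
  | cons hadj q ih =>
    cases i with
    | zero => simp [Walk.getVert]
    | succ i =>
      simp only [Walk.edges_cons] at h ⊢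
      simpa [Walk.getVert_cons_succ] using ih i (by simpa using h)

end Aux

/-- Lemma 2.4: Let `P = u₁u₂…u_{l+1}v₁` be a path in `G` (here `uᵢ = p.getVert (i-1)`,
`u₁ = u`, `u_{l+1} = w`) such that (a) `u₁…u_{l+1}` is a longest heterochromatic path
in `G`, and (b) `C(u_{l+1}v₁) = C(u_{j₀}u_{j₀+1})` with `1 ≤ j₀ ≤ l` as small as
possible over all such configurations.  Then for every `x` with
`j₀ + 1 ≤ x ≤ 2j₀` (and `x ≤ l + 1`), if `u₁uₓ` is an edge of `G`, then its color
lies in `C(u₁…u_{l+1})`. -/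
theorem stmt3 {V : Type*} (G : SimpleGraph V) (C : Sym2 V → ℕ) {u w : V} (l : ℕ)
    (p : G.Walk u w) (hlen : p.length = l)
    (hhet : Heterochromatic G C p)
    (hmax : ∀ (a b : V) (q : G.Walk a b), Heterochromatic G C q → q.length ≤ l)
    (v₁ : V) (hv₁ : v₁ ∉ p.support) (hadj : G.Adj w v₁)
    (j₀ : ℕ) (hj₀1 : 1 ≤ j₀) (hj₀l : j₀ ≤ l)
    (hcol : C s(w, v₁) = C s(p.getVert (j₀ - 1), p.getVert j₀))
    (hmin : ∀ (a b : V) (q : G.Walk a b), Heterochromatic G C q → q.length = l →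
      ∀ z : V, z ∉ q.support → G.Adj b z → ∀ j : ℕ, 1 ≤ j → j ≤ l →
        C s(b, z) = C s(q.getVert (j - 1), q.getVert j) → j₀ ≤ j) :
    ∀ x : ℕ, j₀ + 1 ≤ x → x ≤ 2 * j₀ → x ≤ l + 1 →
      G.Adj u (p.getVert (x - 1)) → C s(u, p.getVert (x - 1)) ∈ p.edges.map C := by
  subst hlen
  obtain ⟨hpath, hcolors⟩ := hhet
  intro x hx1 hx2 hx3 hadjx
  by_contra hnot
  obtain ⟨m, rfl⟩ : ∃ m, x = m + 2 := ⟨x - 2, by omega⟩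
  have hm1 : m + 2 - 1 = m + 1 := rfl
  rw [hm1] at hadjx hnot
  have hm1l : m + 1 ≤ p.length := by omega
  have hml : m ≤ p.length := by omega
  set L := p.edges.map C with hL
  -- the rotated walk
  set q : G.Walk (p.getVert m) w :=
    ((myTake p m).reverse).append (Walk.cons hadjx (p.drop (m + 1))) with hq
  have hqsup : q.support.Perm p.support := by
    have hsup : q.support = (p.support.take (m + 1)).reverse ++ p.support.drop (m + 1) := by
      rw [hq, Walk.support_append, Walk.support_reverse, myTake_support, Walk.support_cons,
        List.tail_cons, drop_support' p (m + 1) hm1l]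
    rw [hsup]
    have h := ((p.support.take (m + 1)).reverse_perm).append_right (p.support.drop (m + 1))
    rwa [List.take_append_drop] at h
  have hqedges : q.edges
      = (p.edges.take m).reverse ++ s(u, p.getVert (m + 1)) :: p.edges.drop (m + 1) := by
    rw [hq, Walk.edges_append, Walk.edges_reverse, myTake_edges, Walk.edges_cons, drop_edges']
  have hEm : p.edges
      = p.edges.take m ++ s(p.getVert m, p.getVert (m + 1)) :: p.edges.drop (m + 1) := by
    conv_lhs => rw [← List.take_append_drop m p.edges]
    rw [List.drop_eq_getElem_cons (by rw [Walk.length_edges]; omega),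
      edges_getElem' p m (by rw [Walk.length_edges]; omega)]
  have hqcol : (q.edges.map C).Perm
      (C s(u, p.getVert (m + 1)) :: (L.take m ++ L.drop (m + 1))) := by
    rw [hqedges]
    simp only [List.map_append, List.map_cons, List.map_reverse, List.map_take,
      List.map_drop, ← hL]
    exact List.perm_middle.trans (List.Perm.cons _ (((L.take m).reverse_perm).append_right _))
  have hsubl : (L.take m ++ L.drop (m + 1)).Sublist L := by
    have h1 : (L.drop (m + 1)).Sublist (L.drop m) := by
      rw [← List.tail_drop]
      exact List.tail_sublist _
    have h2 := h1.append_left (L.take m)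
    rwa [List.take_append_drop] at h2
  have hcolnotin : C s(u, p.getVert (m + 1)) ∉ L := hnot
  have hqhet : Heterochromatic G C q := by
    constructor
    · rw [Walk.isPath_def]
      exact hqsup.nodup_iff.mpr hpath.support_nodup
    · rw [hqcol.nodup_iff]
      exact List.nodup_cons.mpr
        ⟨fun hmem => hcolnotin (hsubl.subset hmem), hsubl.nodup hcolors⟩
  have hqlen : q.length = p.length := by
    rw [hq, Walk.length_append, Walk.length_reverse, myTake_length p m hml, Walk.length_cons,
      drop_length']
    omega
  have hv₁q : v₁ ∉ q.support := fun h => hv₁ (hqsup.mem_iff.mp h)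
  have hqget : ∀ i, i ≤ m → q.getVert i = p.getVert (m - i) := by
    intro i hi
    rw [hq, Walk.getVert_append, Walk.length_reverse, myTake_length p m hml]
    rcases lt_or_eq_of_le hi with h | h
    · rw [if_pos h, Walk.getVert_reverse, myTake_length p m hml, myTake_getVert]
      congr 1
      omega
    · subst h
      rw [if_neg (lt_irrefl _), Nat.sub_self]
      simp
  rcases Nat.lt_or_ge j₀ (m + 1) with hj | hj
  · -- j₀ ≤ m : contradiction with minimality of j₀
    have h1 : q.getVert (m + 1 - j₀ - 1) = p.getVert j₀ := by
      rw [show m + 1 - j₀ - 1 = m - j₀ from by omega, hqget _ (by omega)]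
      congr 1
      omega
    have h2 : q.getVert (m + 1 - j₀) = p.getVert (j₀ - 1) := by
      rw [hqget _ (by omega)]
      congr 1
      omega
    have := hmin _ _ q hqhet hqlen v₁ hv₁q hadj (m + 1 - j₀) (by omega) (by omega)
      (by
        have e : s(q.getVert (m + 1 - j₀ - 1), q.getVert (m + 1 - j₀))
            = s(p.getVert (j₀ - 1), p.getVert j₀) := by
          rw [h1, h2]; exact Sym2.eq_swap
        rw [e]; exact hcol)
    omega
  · -- j₀ = m + 1 : q.concat hadj is a longer heterochromatic path
    have hjm : j₀ = m + 1 := by omega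
    have hcol' : C s(w, v₁) = C s(p.getVert m, p.getVert (m + 1)) := by
      rw [hcol, hjm, show m + 1 - 1 = m from rfl]
    have hE : L = L.take m ++ C s(p.getVert m, p.getVert (m + 1)) :: L.drop (m + 1) := by
      conv_lhs => rw [hL, hEm]
      simp [hL, List.map_take, List.map_drop]
    have hnd2 : (L.take m ++ C s(p.getVert m, p.getVert (m + 1)) :: L.drop (m + 1)).Nodup :=
      hE ▸ hcolors
    rw [List.nodup_append] at hnd2
    obtain ⟨-, hnd3, hdisj⟩ := hnd2
    rw [List.nodup_cons] at hnd3
    have hnotin : C s(p.getVert m, p.getVert (m + 1)) ∉ L.take m ++ L.drop (m + 1) := by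
      intro h
      rcases List.mem_append.mp h with h | h
      · exact hdisj _ h _ List.mem_cons_self rfl
      · exact hnd3.1 h
    have hmemL : C s(p.getVert m, p.getVert (m + 1)) ∈ L := by
      rw [hE]
      simp
    have hcnotq : C s(w, v₁) ∉ q.edges.map C := by
      rw [hqcol.mem_iff]
      intro h
      rcases List.mem_cons.mp h with h | h
      · rw [hcol'] at h
        exact hcolnotin (h ▸ hmemL)
      · exact hnotin (hcol' ▸ h)
    have hq'het : Heterochromatic G C (q.concat hadj) := by
      constructor
      · rw [Walk.isPath_def, Walk.support_concat]
        rw [List.nodup_append]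
        exact ⟨hqhet.1.support_nodup, List.nodup_singleton _,
          fun a ha b hb hab => hv₁q (by rw [List.mem_singleton] at hb; subst hb; subst hab; exact ha)⟩
      · rw [Walk.edges_concat, List.concat_eq_append, List.map_append, List.nodup_append]
        refine ⟨hqhet.2, List.nodup_singleton _, fun a ha b hb hab => ?_⟩
        simp only [List.map_cons, List.map_nil, List.mem_singleton] at hb
        rw [hab, hb] at ha
        exact hcnotq ha
    have := hmax _ _ (q.concat hadj) hq'het
    rw [Walk.length_concat, hqlen] at this
    omega
end

section
/- Let G be an edge-colored graph and let P = u_1 u_2 … u_l u_{l+1} v_1 be a path in G such that: (a) u_1 u_2 … u_{l+1} is a heterochromatic path of maximum length in G; and (b) C(u_{l+1} v_1) = C(u_{j_0} u_{j_0+1}) for some index 1 ≤ j_0 ≤ l, where j_0 is as small as possible over all configurations satisfying (a); that is, for every heterochromatic path w_1 w_2 … w_{l+1} of maximum length in G, every vertex w not on that path with w_{l+1} w an edge of G, and every index j with C(w_{l+1} w) = C(w_j w_{j+1}), one has j ≥ j_0. Then for every x with 2 j_0 + 1 ≤ x ≤ l, at most one of the colors C(u_1 u_x) and C(u_1 u_{x+1})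 lies outside C(P'), where P' denotes the heterochromatic path u_1 u_2 … u_{l+1}; that is, |{C(u_1 u_x), C(u_1 u_{x+1})} \ C(P')| ≤ 1 (a non-edge u_1 u_y contributes no color to this set). -/
open SimpleGraph List

lemma walk_support_eq {V : Type*} {G : SimpleGraph V} {u v : V} (p : G.Walk u v) :
    p.support = (List.range (p.length + 1)).map p.getVert := by
  induction p with
  | nil => simp [Walk.getVert]
  | cons h q ih =>
    rw [Walk.support_cons, Walk.length_cons, List.range_succ_eq_map, ih]
    simp [List.map_map, Function.comp_def, Walk.getVert_cons_succ]

lemma walk_edges_eq {V : Type*} {G : SimpleGraph V} {u v : V} (p : G.Walk u v) :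
    p.edges = (List.range p.length).map (fun i => s(p.getVert i, p.getVert (i+1))) := by
  induction p with
  | nil => simp
  | cons h q ih =>
    rw [Walk.edges_cons, Walk.length_cons, List.range_succ_eq_map, ih]
    simp [List.map_map, Function.comp_def, Walk.getVert_cons_succ, Walk.getVert_zero]

lemma exists_walk {V : Type*} (G : SimpleGraph V) :
    ∀ (n : ℕ) (f : ℕ → V), (∀ i < n, G.Adj (f i) (f (i+1))) →
      ∃ q : G.Walk (f 0) (f n), q.length = n ∧ ∀ i ≤ n, q.getVert i = f i := by
  intro n
  induction n with
  | zero => exact fun f _ => ⟨Walk.nil, rfl, fun i hi => by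
      simp [Nat.le_zero.mp hi]⟩
  | succ n ih =>
    intro f hadj
    obtain ⟨q, hq1, hq2⟩ := ih (fun i => f (i+1)) (fun i hi => hadj (i+1) (by omega))
    refine ⟨Walk.cons (hadj 0 (by omega)) q, by simp [hq1], ?_⟩
    intro i hi
    cases i with
    | zero => simp
    | succ i => rw [Walk.getVert_cons_succ]; exact hq2 i (by omega)

lemma key {V : Type*} (G : SimpleGraph V) (C : Sym2 V → ℕ) {u w : V} (l : ℕ)
    (p : G.Walk u w) (hlen : p.length = l)
    (hhet : Heterochromatic G C p)
    (hmax : ∀ (a b : V) (q : G.Walk a b), Heterochromatic G C q → q.length ≤ l)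
    (v₁ : V) (hv₁ : v₁ ∉ p.support) (hadj : G.Adj w v₁)
    (j₀ : ℕ) (hj₀1 : 1 ≤ j₀) (hj₀l : j₀ ≤ l)
    (hcol : C s(w, v₁) = C s(p.getVert (j₀ - 1), p.getVert j₀))
    (hmin : ∀ (a b : V) (q : G.Walk a b), Heterochromatic G C q → q.length = l →
      ∀ z : V, z ∉ q.support → G.Adj b z → ∀ j : ℕ, 1 ≤ j → j ≤ l →
        C s(b, z) = C s(q.getVert (j - 1), q.getVert j) → j₀ ≤ j)
    (x : ℕ) (hx1 : 2 * j₀ + 1 ≤ x) (hx2 : x ≤ l)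
    (hA₁ : G.Adj u (p.getVert (x - 1))) (hA₂ : G.Adj u (p.getVert x))
    (hn₁ : C s(u, p.getVert (x - 1)) ∉ p.edges.map C)
    (hn₂ : C s(u, p.getVert x) ∉ p.edges.map C)
    (hne : C s(u, p.getVert (x - 1)) ≠ C s(u, p.getVert x)) : False := by
  have hx3 : 3 ≤ x := by omega
  have hl3 : 3 ≤ l := by omega
  have padj : ∀ i < l, G.Adj (p.getVert i) (p.getVert (i+1)) := fun i hi =>
    p.adj_getVert_succ (by omega)
  set cs : ℕ → ℕ := fun i => C s(p.getVert i, p.getVert (i+1)) with hcs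
  have hedges : p.edges.map C = (List.range l).map cs := by
    rw [walk_edges_eq, hlen, List.map_map]; rfl
  have csinj : ∀ i < l, ∀ j < l, cs i = cs j → i = j := by
    intro i hi j hj h
    have := List.inj_on_of_nodup_map (hedges ▸ hhet.2)
    exact this (List.mem_range.mpr hi) (List.mem_range.mpr hj) h
  have pinj : ∀ i ≤ l, ∀ j ≤ l, p.getVert i = p.getVert j → i = j := by
    intro i hi j hj h
    have hs := hhet.1.support_nodup
    rw [walk_support_eq, hlen] at hs
    have := List.inj_on_of_nodup_map hs
    exact this (List.mem_range.mpr (by omega)) (List.mem_range.mpr (by omega)) h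
  have hn₁' : ∀ i < l, C s(u, p.getVert (x - 1)) ≠ cs i := by
    intro i hi h
    exact hn₁ (hedges ▸ List.mem_map.mpr ⟨i, List.mem_range.mpr hi, h.symm⟩)
  have hn₂' : ∀ i < l, C s(u, p.getVert x) ≠ cs i := by
    intro i hi h
    exact hn₂ (hedges ▸ List.mem_map.mpr ⟨i, List.mem_range.mpr hi, h.symm⟩)
  set σ : ℕ → ℕ := fun i => if i < x - 1 then i + 1 else if i = x - 1 then 0 else i with hσ
  set f : ℕ → V := fun i => p.getVert (σ i) with hf
  have σ₁ : ∀ i, i < x - 1 → σ i = i + 1 := by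
    intro i hi
    show (if i < x - 1 then i + 1 else if i = x - 1 then 0 else i) = i + 1
    rw [if_pos hi]
  have σ₂ : σ (x - 1) = 0 := by
    show (if x - 1 < x - 1 then x - 1 + 1 else if x - 1 = x - 1 then 0 else x - 1) = 0
    rw [if_neg (lt_irrefl _), if_pos rfl]
  have σ₃ : ∀ i, x - 1 < i → σ i = i := by
    intro i hi
    show (if i < x - 1 then i + 1 else if i = x - 1 then 0 else i) = i
    rw [if_neg (by omega), if_neg (by omega)]
  have σle : ∀ i ≤ l, σ i ≤ l := by
    intro i hi
    show (if i < x - 1 then i + 1 else if i = x - 1 then 0 else i) ≤ l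
    split_ifs <;> omega
  have σinj : ∀ i ≤ l, ∀ j ≤ l, σ i = σ j → i = j := by
    intro i hi j hj h
    have h' : (if i < x - 1 then i + 1 else if i = x - 1 then 0 else i)
        = (if j < x - 1 then j + 1 else if j = x - 1 then 0 else j) := h
    split_ifs at h' <;> omega
  have hgv0 : p.getVert 0 = u := p.getVert_zero
  have hgvl : p.getVert l = w := by rw [← hlen]; exact p.getVert_length
  have hfadj : ∀ i < l, G.Adj (f i) (f (i+1)) := by
    intro i hi
    show G.Adj (p.getVert (σ i)) (p.getVert (σ (i+1)))
    rcases show i < x - 2 ∨ i = x - 2 ∨ i = x - 1 ∨ x - 1 < i by omega with h | h | h | h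
    · rw [σ₁ i (by omega), σ₁ (i+1) (by omega)]
      exact padj (i+1) (by omega)
    · rw [show i + 1 = x - 1 by omega, σ₂, σ₁ i (by omega),
        show i + 1 = x - 1 by omega, hgv0]
      exact hA₁.symm
    · rw [h, σ₂, σ₃ (x - 1 + 1) (by omega), show x - 1 + 1 = x by omega, hgv0]
      exact hA₂
    · rw [σ₃ i h, σ₃ (i+1) (by omega)]
      exact padj i hi
  obtain ⟨q, hql, hqv⟩ := exists_walk G l f hfadj
  -- values of f
  have f₁ : ∀ i, i < x - 1 → f i = p.getVert (i+1) := by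
    intro i hi; show p.getVert (σ i) = _; rw [σ₁ i hi]
  have f₂ : f (x - 1) = u := by
    show p.getVert (σ (x-1)) = u; rw [σ₂, hgv0]
  have f₃ : ∀ i, x - 1 < i → f i = p.getVert i := by
    intro i hi; show p.getVert (σ i) = _; rw [σ₃ i hi]
  -- colors of q's edges
  set g : ℕ → ℕ := fun i => C s(f i, f (i+1)) with hg
  have qe : q.edges.map C = (List.range l).map g := by
    rw [walk_edges_eq, hql, List.map_map]
    apply List.map_congr_left
    intro i hi
    rw [List.mem_range] at hi
    show C s(q.getVert i, q.getVert (i+1)) = C s(f i, f (i+1))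
    rw [hqv i (by omega), hqv (i+1) (by omega)]
  have gval₁ : ∀ i, i < x - 2 → g i = cs (i+1) := by
    intro i hi
    show C s(f i, f (i+1)) = C s(p.getVert (i+1), p.getVert (i+1+1))
    rw [f₁ i (by omega), f₁ (i+1) (by omega)]
  have gval₂ : g (x-2) = C s(u, p.getVert (x-1)) := by
    show C s(f (x-2), f (x-2+1)) = _
    rw [show x - 2 + 1 = x - 1 by omega, f₂, f₁ (x-2) (by omega),
      show x - 2 + 1 = x - 1 by omega, Sym2.eq_swap]
  have gval₃ : g (x-1) = C s(u, p.getVert x) := by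
    show C s(f (x-1), f (x-1+1)) = _
    rw [f₂, show x - 1 + 1 = x by omega, f₃ x (by omega)]
  have gval₄ : ∀ i, x - 1 < i → g i = cs i := by
    intro i hi
    show C s(f i, f (i+1)) = C s(p.getVert i, p.getVert (i+1))
    rw [f₃ i hi, f₃ (i+1) (by omega)]
  have ginj : ∀ i < l, ∀ j < l, g i = g j → i = j := by
    intro i hi j hj h
    rcases show i < x - 2 ∨ i = x - 2 ∨ i = x - 1 ∨ x - 1 < i by omega with h1 | h1 | h1 | h1 <;>
      rcases show j < x - 2 ∨ j = x - 2 ∨ j = x - 1 ∨ x - 1 < j by omega with h2 | h2 | h2 | h2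
    · rw [gval₁ i h1, gval₁ j h2] at h
      have := csinj (i+1) (by omega) (j+1) (by omega) h; omega
    · rw [gval₁ i h1, h2, gval₂] at h; exact absurd h.symm (hn₁' (i+1) (by omega))
    · rw [gval₁ i h1, h2, gval₃] at h; exact absurd h.symm (hn₂' (i+1) (by omega))
    · rw [gval₁ i h1, gval₄ j h2] at h
      have := csinj (i+1) (by omega) j (by omega) h; omega
    · rw [h1, gval₂, gval₁ j h2] at h; exact absurd h (hn₁' (j+1) (by omega))
    · omega
    · rw [h1, h2, gval₂, gval₃] at h; exact absurd h hne
    · rw [h1, gval₂, gval₄ j h2] at h; exact absurd h (hn₁' j (by omega))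
    · rw [h1, gval₃, gval₁ j h2] at h; exact absurd h (hn₂' (j+1) (by omega))
    · rw [h1, h2, gval₃, gval₂] at h; exact absurd h.symm hne
    · omega
    · rw [h1, gval₃, gval₄ j h2] at h; exact absurd h (hn₂' j (by omega))
    · rw [gval₄ i h1, gval₁ j h2] at h
      have := csinj i (by omega) (j+1) (by omega) h; omega
    · rw [gval₄ i h1, h2, gval₂] at h; exact absurd h.symm (hn₁' i (by omega))
    · rw [gval₄ i h1, h2, gval₃] at h; exact absurd h.symm (hn₂' i (by omega))
    · rw [gval₄ i h1, gval₄ j h2] at h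
      exact csinj i (by omega) j (by omega) h
  have gnodup : ((List.range l).map g).Nodup := by
    refine List.Nodup.map_on ?_ (List.nodup_range : (List.range l).Nodup)
    intro i hi j hj h
    exact ginj i (List.mem_range.mp hi) j (List.mem_range.mp hj) h
  have qsup : q.support = (List.range (l+1)).map f := by
    rw [walk_support_eq, hql]
    apply List.map_congr_left
    intro i hi
    rw [List.mem_range] at hi
    exact hqv i (by omega)
  have qpath : q.IsPath := by
    rw [Walk.isPath_def, qsup]
    refine List.Nodup.map_on ?_ (List.nodup_range : (List.range (l+1)).Nodup)
    intro i hi j hj h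
    rw [List.mem_range] at hi hj
    have h' : p.getVert (σ i) = p.getVert (σ j) := h
    exact σinj i (by omega) j (by omega)
      (pinj (σ i) (σle i (by omega)) (σ j) (σle j (by omega)) h')
  have qhet : Heterochromatic G C q := ⟨qpath, by rw [qe]; exact gnodup⟩
  have fmem : ∀ i ≤ l, f i ∈ p.support := by
    intro i hi
    exact Walk.mem_support_iff_exists_getVert.mpr
      ⟨σ i, rfl, by rw [hlen]; exact σle i hi⟩
  have qv₁ : v₁ ∉ q.support := by
    rw [qsup]
    intro hmem
    obtain ⟨i, hi, hfi⟩ := List.mem_map.mp hmem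
    rw [List.mem_range] at hi
    exact hv₁ (hfi ▸ fmem i (by omega))
  have hfl : f l = w := by rw [f₃ l (by omega), hgvl]
  rcases Nat.lt_or_ge j₀ 2 with hj2 | hj2
  · -- j₀ = 1 : extend q by v₁ to get a longer heterochromatic path
    have hj₀ : j₀ = 1 := by omega
    have hc0 : C s(w, v₁) = cs 0 := by
      have := hcol; rw [hj₀] at this; exact this
    set f' : ℕ → V := fun i => if i ≤ l then f i else v₁ with hf'
    have f'eq : ∀ i ≤ l, f' i = f i := by
      intro i hi; show (if i ≤ l then f i else v₁) = f i; rw [if_pos hi]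
    have f'l1 : f' (l+1) = v₁ := by
      show (if l+1 ≤ l then f (l+1) else v₁) = v₁; rw [if_neg (by omega)]
    have hf'adj : ∀ i < l+1, G.Adj (f' i) (f' (i+1)) := by
      intro i hi
      rcases Nat.lt_or_ge i l with h | h
      · rw [f'eq i (by omega), f'eq (i+1) (by omega)]; exact hfadj i h
      · have hil : i = l := by omega
        subst hil
        rw [f'eq i le_rfl, f'l1, hfl]
        exact hadj
    obtain ⟨q', hq'l, hq'v⟩ := exists_walk G (l+1) f' hf'adj
    have q'sup : q'.support = (List.range (l+2)).map f' := by
      rw [walk_support_eq, hq'l]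
      apply List.map_congr_left
      intro i hi
      rw [List.mem_range] at hi
      exact hq'v i (by omega)
    have q'path : q'.IsPath := by
      rw [Walk.isPath_def, q'sup]
      refine List.Nodup.map_on ?_ (List.nodup_range : (List.range (l+2)).Nodup)
      intro i hi j hj h
      rw [List.mem_range] at hi hj
      rcases Nat.lt_or_ge i (l+1) with h1 | h1 <;> rcases Nat.lt_or_ge j (l+1) with h2 | h2
      · rw [f'eq i (by omega), f'eq j (by omega)] at h
        have h' : p.getVert (σ i) = p.getVert (σ j) := h
        exact σinj i (by omega) j (by omega)
          (pinj (σ i) (σle i (by omega)) (σ j) (σle j (by omega)) h')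
      · exfalso
        have hj' : j = l + 1 := by omega
        rw [f'eq i (by omega), hj', f'l1] at h
        exact hv₁ (h ▸ fmem i (by omega))
      · exfalso
        have hi' : i = l + 1 := by omega
        rw [f'eq j (by omega), hi', f'l1] at h
        exact hv₁ (h.symm ▸ fmem j (by omega))
      · omega
    have q'e : q'.edges.map C = ((List.range l).map g) ++ [C s(w, v₁)] := by
      rw [walk_edges_eq, hq'l, List.map_map, List.range_succ, List.map_append]
      congr 1
      · apply List.map_congr_left
        intro i hi
        rw [List.mem_range] at hi
        show C s(q'.getVert i, q'.getVert (i+1)) = g i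
        rw [hq'v i (by omega), hq'v (i+1) (by omega),
          f'eq i (by omega), f'eq (i+1) (by omega)]
      · show [C s(q'.getVert l, q'.getVert (l+1))] = [C s(w, v₁)]
        rw [hq'v l (by omega), hq'v (l+1) le_rfl, f'eq l le_rfl, f'l1, hfl]
    have q'het : Heterochromatic G C q' := by
      refine ⟨q'path, ?_⟩
      rw [q'e, List.nodup_append]
      refine ⟨gnodup, List.nodup_singleton _, ?_⟩
      intro a ha b hb₀ hab
      have hb : a ∈ [C s(w, v₁)] := hab ▸ hb₀
      rw [List.mem_singleton] at hb
      subst hb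
      obtain ⟨i, hi, hgi⟩ := List.mem_map.mp ha
      rw [List.mem_range] at hi
      rw [hc0] at hgi
      rcases show i < x - 2 ∨ i = x - 2 ∨ i = x - 1 ∨ x - 1 < i by omega
        with h | h | h | h
      · rw [gval₁ i h] at hgi
        have := csinj (i+1) (by omega) 0 (by omega) hgi
        omega
      · rw [h, gval₂] at hgi
        exact hn₁' 0 (by omega) hgi
      · rw [h, gval₃] at hgi
        exact hn₂' 0 (by omega) hgi
      · rw [gval₄ i h] at hgi
        have := csinj i (by omega) 0 (by omega) hgi
        omega
    have := hmax _ _ q' q'het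
    omega
  · -- j₀ ≥ 2 : contradict minimality of j₀
    have hcolq : C s(f l, v₁) = C s(q.getVert (j₀ - 1 - 1), q.getVert (j₀ - 1)) := by
      rw [hqv (j₀ - 1 - 1) (by omega), hqv (j₀ - 1) (by omega), hfl]
      rw [show j₀ - 1 - 1 = j₀ - 2 by omega]
      rw [f₁ (j₀ - 2) (by omega), f₁ (j₀ - 1) (by omega)]
      rw [show j₀ - 2 + 1 = j₀ - 1 by omega, show j₀ - 1 + 1 = j₀ by omega]
      exact hcol
    have := hmin _ _ q qhet hql v₁ qv₁ (by rw [hfl]; exact hadj) (j₀ - 1)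
      (by omega) (by omega) hcolq
    omega



/-- Lemma 2.5: Let `P = u₁u₂…u_{l+1}v₁` be a path in `G` (here `uᵢ = p.getVert (i-1)`,
`u₁ = u`, `u_{l+1} = w`) such that (a) `u₁…u_{l+1}` is a longest heterochromatic path
in `G`, and (b) `C(u_{l+1}v₁) = C(u_{j₀}u_{j₀+1})` with `1 ≤ j₀ ≤ l` as small as
possible over all such configurations.  Then for every `x` with `2j₀ + 1 ≤ x ≤ l`,
at most one of the colors `C(u₁uₓ)`, `C(u₁u_{x+1})` lies outside `C(u₁…u_{l+1})`
(a non-edge contributes no color). -/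
theorem stmt4 {V : Type*} (G : SimpleGraph V) (C : Sym2 V → ℕ) {u w : V} (l : ℕ)
    (p : G.Walk u w) (hlen : p.length = l)
    (hhet : Heterochromatic G C p)
    (hmax : ∀ (a b : V) (q : G.Walk a b), Heterochromatic G C q → q.length ≤ l)
    (v₁ : V) (hv₁ : v₁ ∉ p.support) (hadj : G.Adj w v₁)
    (j₀ : ℕ) (hj₀1 : 1 ≤ j₀) (hj₀l : j₀ ≤ l)
    (hcol : C s(w, v₁) = C s(p.getVert (j₀ - 1), p.getVert j₀))
    (hmin : ∀ (a b : V) (q : G.Walk a b), Heterochromatic G C q → q.length = l →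
      ∀ z : V, z ∉ q.support → G.Adj b z → ∀ j : ℕ, 1 ≤ j → j ≤ l →
        C s(b, z) = C s(q.getVert (j - 1), q.getVert j) → j₀ ≤ j) :
    ∀ x : ℕ, 2 * j₀ + 1 ≤ x → x ≤ l →
      (({c | (G.Adj u (p.getVert (x - 1)) ∧ C s(u, p.getVert (x - 1)) = c) ∨
             (G.Adj u (p.getVert x) ∧ C s(u, p.getVert x) = c)} : Set ℕ) \
        {c | c ∈ p.edges.map C}).ncard ≤ 1 := by
  intro x hx1 hx2
  by_contra hcon
  push_neg at hcon
  set S : Set ℕ := ({c | (G.Adj u (p.getVert (x - 1)) ∧ C s(u, p.getVert (x - 1)) = c) ∨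
             (G.Adj u (p.getVert x) ∧ C s(u, p.getVert x) = c)} : Set ℕ) \
        {c | c ∈ p.edges.map C} with hS
  have hsub : S ⊆ {C s(u, p.getVert (x-1)), C s(u, p.getVert x)} := by
    rintro c ⟨hc, -⟩
    rcases hc with ⟨-, h⟩ | ⟨-, h⟩
    · exact Or.inl h.symm
    · exact Or.inr h.symm
  have hfin : S.Finite := ((Set.finite_singleton _).insert _).subset hsub
  obtain ⟨a, b, ha, hb, hab⟩ := (Set.one_lt_ncard_iff hfin).mp hcon
  obtain ⟨ha1, ha2⟩ := ha
  obtain ⟨hb1, hb2⟩ := hb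
  have ha2' : a ∉ p.edges.map C := ha2
  have hb2' : b ∉ p.edges.map C := hb2
  rcases ha1 with ⟨hA₁, hCa⟩ | ⟨hA₂, hCa⟩ <;> rcases hb1 with ⟨hB₁, hCb⟩ | ⟨hB₂, hCb⟩
  · exact hab (hCa.symm.trans hCb)
  · exact key G C l p hlen hhet hmax v₁ hv₁ hadj j₀ hj₀1 hj₀l hcol hmin x hx1 hx2
      hA₁ hB₂ (by rw [hCa]; exact ha2') (by rw [hCb]; exact hb2')
      (by rw [hCa, hCb]; exact hab)
  · exact key G C l p hlen hhet hmax v₁ hv₁ hadj j₀ hj₀1 hj₀l hcol hmin x hx1 hx2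
      hB₁ hA₂ (by rw [hCb]; exact hb2') (by rw [hCa]; exact ha2')
      (by rw [hCb, hCa]; exact hab.symm)
  · exact hab (hCa.symm.trans hCb)
end

section
/- Let G be an edge-colored graph and let s ≥ 4 be an integer. If |CN(u) ∪ CN(v)| ≥ s for every pair of distinct vertices u and v of G (and G has at least two vertices), then G contains a heterochromatic path of length at least ⌊(2s+4)/5⌋. -/
open SimpleGraph

namespace HetAux

variable {V : Type*} (G : SimpleGraph V) (C : Sym2 V → ℕ)

/-- A heterochromatic path of length `m`, presented as an indexed sequence of
vertices `f 0, f 1, ..., f m`. -/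
def IsHP (m : ℕ) (f : ℕ → V) : Prop :=
  (∀ j, j < m → G.Adj (f j) (f (j+1))) ∧
  (∀ a b, a ≤ m → b ≤ m → f a = f b → a = b) ∧
  (∀ a b, a < m → b < m → C s(f a, f (a+1)) = C s(f b, f (b+1)) → a = b)

variable {G C}

theorem isHP_walk {m : ℕ} {f : ℕ → V} (h : IsHP G C m f) :
    ∃ p : G.Walk (f 0) (f m), p.support = (List.range (m+1)).map f ∧
      p.edges = (List.range m).map (fun j => s(f j, f (j+1))) := by
  induction m generalizing f with
  | zero => exact ⟨Walk.nil, by rw [show (1:ℕ) = 0 + 1 from rfl, List.range_succ]; simp, by simp⟩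
  | succ n ih =>
    obtain ⟨h1, h2, h3⟩ := h
    obtain ⟨p, hs, he⟩ := ih (f := fun j => f (j+1))
      ⟨fun j hj => h1 (j+1) (by omega),
       fun a b ha hb hab => by have := h2 (a+1) (b+1) (by omega) (by omega) hab; omega,
       fun a b ha hb hab => by have := h3 (a+1) (b+1) (by omega) (by omega) hab; omega⟩
    refine ⟨Walk.cons (h1 0 (by omega)) p, ?_, ?_⟩
    · rw [Walk.support_cons, hs]
      conv_rhs => rw [List.range_succ_eq_map]
      rw [List.map_cons, List.map_map]
      simp [Function.comp_def]
    · rw [Walk.edges_cons, he]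
      conv_rhs => rw [List.range_succ_eq_map]
      rw [List.map_cons, List.map_map]
      simp [Function.comp_def]

theorem isHP_het {m : ℕ} {f : ℕ → V} (h : IsHP G C m f) :
    ∃ (a b : V) (p : G.Walk a b), Heterochromatic G C p ∧ p.length = m := by
  obtain ⟨p, hs, he⟩ := isHP_walk h
  refine ⟨f 0, f m, p, ⟨?_, ?_⟩, ?_⟩
  · rw [Walk.isPath_def, hs]
    exact List.Nodup.map_on (fun a ha b hb hab => by
      rw [List.mem_range] at ha hb
      exact h.2.1 a b (by omega) (by omega) hab) List.nodup_range
  · rw [he, List.map_map]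
    exact List.Nodup.map_on (fun a ha b hb hab => by
      rw [List.mem_range] at ha hb
      exact h.2.2 a b ha hb hab) List.nodup_range
  · have h1 : p.support.length = m + 1 := by rw [hs]; simp
    have h2 := SimpleGraph.Walk.length_support p
    omega

theorem isHP_card [Fintype V] {m : ℕ} {f : ℕ → V} (h : IsHP G C m f) :
    m + 1 ≤ Fintype.card V := by
  have hinj : Function.Injective (fun j : Fin (m+1) => f j) := by
    intro a b hab
    exact Fin.ext (h.2.1 a b (Nat.lt_succ_iff.mp a.isLt) (Nat.lt_succ_iff.mp b.isLt) hab)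
  calc m + 1 = Fintype.card (Fin (m+1)) := (Fintype.card_fin _).symm
    _ ≤ Fintype.card V := Fintype.card_le_of_injective _ hinj

/-- Extension of a path at its far end. -/
def extEnd (f : ℕ → V) (m : ℕ) (y : V) : ℕ → V := fun j => if j ≤ m then f j else y

theorem extEnd_le {f : ℕ → V} {m : ℕ} {y : V} {j : ℕ} (h : j ≤ m) : extEnd f m y j = f j :=
  if_pos h

theorem extEnd_gt {f : ℕ → V} {m : ℕ} {y : V} {j : ℕ} (h : m < j) : extEnd f m y j = y :=
  if_neg (by omega)

theorem isHP_extEnd {m : ℕ} {f : ℕ → V} {y : V} (h : IsHP G C m f) (hadj : G.Adj (f m) y)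
    (hy : ∀ j, j ≤ m → f j ≠ y) (hc : ∀ j, j < m → C s(f j, f (j+1)) ≠ C s(f m, y)) :
    IsHP G C (m+1) (extEnd f m y) := by
  obtain ⟨h1, h2, h3⟩ := h
  have hcol : ∀ j, j < m + 1 → C s(extEnd f m y j, extEnd f m y (j+1)) =
      if j < m then C s(f j, f (j+1)) else C s(f m, y) := by
    intro j hj
    rcases Nat.lt_or_ge j m with h4 | h4
    · rw [extEnd_le (by omega), extEnd_le (by omega), if_pos h4]
    · have hjm : j = m := by omega
      subst hjm
      rw [extEnd_le le_rfl, extEnd_gt (by omega), if_neg (by omega)]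
  refine ⟨?_, ?_, ?_⟩
  · intro j hj
    rcases Nat.lt_or_ge j m with h4 | h4
    · rw [extEnd_le (by omega), extEnd_le (by omega)]; exact h1 j h4
    · have hjm : j = m := by omega
      subst hjm
      rw [extEnd_le le_rfl, extEnd_gt (by omega)]; exact hadj
  · intro a b ha hb hab
    rcases le_or_gt a m with h4 | h4 <;> rcases le_or_gt b m with h5 | h5
    · rw [extEnd_le h4, extEnd_le h5] at hab; exact h2 a b h4 h5 hab
    · rw [extEnd_le h4, extEnd_gt h5] at hab; exact absurd hab (hy a h4)
    · rw [extEnd_gt h4, extEnd_le h5] at hab; exact absurd hab.symm (hy b h5)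
    · omega
  · intro a b ha hb hab
    rw [hcol a ha, hcol b hb] at hab
    split_ifs at hab with hA hB hB
    · exact h3 a b hA hB hab
    · exact absurd hab (hc a hA)
    · exact absurd hab.symm (hc b hB)
    · omega

/-- Extension of a path at its near end. -/
def extBeg (f : ℕ → V) (y : V) : ℕ → V := fun j => if j = 0 then y else f (j-1)

theorem extBeg_zero {f : ℕ → V} {y : V} : extBeg f y 0 = y := rfl

theorem extBeg_pos {f : ℕ → V} {y : V} {j : ℕ} (h : 0 < j) : extBeg f y j = f (j-1) :=
  if_neg (by omega)

theorem isHP_extBeg {m : ℕ} {f : ℕ → V} {y : V} (h : IsHP G C m f) (hadj : G.Adj y (f 0))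
    (hy : ∀ j, j ≤ m → f j ≠ y) (hc : ∀ j, j < m → C s(f j, f (j+1)) ≠ C s(y, f 0)) :
    IsHP G C (m+1) (extBeg f y) := by
  obtain ⟨h1, h2, h3⟩ := h
  have hval : ∀ j, 0 < j → j ≤ m + 1 → extBeg f y j = f (j-1) := fun j hj _ => extBeg_pos hj
  have hcol : ∀ j, j < m + 1 → C s(extBeg f y j, extBeg f y (j+1)) =
      if j = 0 then C s(y, f 0) else C s(f (j-1), f (j-1+1)) := by
    intro j hj
    rcases Nat.eq_zero_or_pos j with h4 | h4
    · subst h4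
      rw [extBeg_zero, extBeg_pos (by omega), if_pos rfl]
    · rw [extBeg_pos h4, extBeg_pos (by omega), if_neg (by omega),
        show j + 1 - 1 = j - 1 + 1 from by omega]
  refine ⟨?_, ?_, ?_⟩
  · intro j hj
    rcases Nat.eq_zero_or_pos j with h4 | h4
    · subst h4
      rw [extBeg_zero, extBeg_pos (by omega)]
      exact hadj
    · rw [extBeg_pos h4, extBeg_pos (by omega), show j + 1 - 1 = j - 1 + 1 from by omega]
      exact h1 (j-1) (by omega)
  · intro a b ha hb hab
    rcases Nat.eq_zero_or_pos a with h4 | h4 <;> rcases Nat.eq_zero_or_pos b with h5 | h5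
    · omega
    · subst h4
      rw [extBeg_zero, extBeg_pos h5] at hab
      exact absurd hab.symm (hy (b-1) (by omega))
    · subst h5
      rw [extBeg_zero, extBeg_pos h4] at hab
      exact absurd hab (hy (a-1) (by omega))
    · rw [extBeg_pos h4, extBeg_pos h5] at hab
      have := h2 (a-1) (b-1) (by omega) (by omega) hab
      omega
  · intro a b ha hb hab
    rw [hcol a ha, hcol b hb] at hab
    split_ifs at hab with hA hB hB
    · omega
    · exact absurd hab.symm (hc (b-1) (by omega))
    · exact absurd hab (hc (a-1) (by omega))
    · have := h3 (a-1) (b-1) (by omega) (by omega) hab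
      omega

end HetAux

namespace HetAux

variable {V : Type*} {G : SimpleGraph V} {C : Sym2 V → ℕ}

/-- The rotated spanning path ending at `v 0`:
`v i, v (i+1), ..., v k, v (i-1), v (i-2), ..., v 0`. -/
def q0idx (k i : ℕ) : ℕ → ℕ := fun j => if j ≤ k - i then i + j else k - j

def q0fun (v : ℕ → V) (k i : ℕ) : ℕ → V := fun j => v (q0idx k i j)

theorem q0idx_le {k i j : ℕ} (h : j ≤ k - i) : q0idx k i j = i + j := if_pos h

theorem q0idx_gt {k i j : ℕ} (h : k - i < j) : q0idx k i j = k - j := if_neg (by omega)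

theorem q0idx_bnd {k i j : ℕ} (hik : i ≤ k) (hj : j ≤ k) : q0idx k i j ≤ k := by
  unfold q0idx; split_ifs <;> omega

theorem q0_main {k i : ℕ} {v : ℕ → V} (hv : IsHP G C k v)
    (hi2 : 2 ≤ i) (hik : i + 1 ≤ k)
    (hbadj : G.Adj (v k) (v (i-1)))
    (hbS : ∀ j, j < k → C s(v k, v (i-1)) ≠ C s(v j, v (j+1))) :
    IsHP G C k (q0fun v k i) ∧ q0fun v k i k = v 0 ∧
      (∀ j, j ≤ k → ∃ t, t ≤ k ∧ q0fun v k i j = v t) ∧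
      (∀ j, j < k → C s(q0fun v k i j, q0fun v k i (j+1)) = C s(v k, v (i-1)) ∨
        ∃ t, t < k ∧ t ≠ i - 1 ∧ C s(q0fun v k i j, q0fun v k i (j+1)) = C s(v t, v (t+1))) := by
  obtain ⟨h1, h2, h3⟩ := hv
  have colid : ∀ j, j < k → C s(q0fun v k i j, q0fun v k i (j+1)) =
      if j < k - i then C s(v (i+j), v (i+j+1))
      else if j = k - i then C s(v k, v (i-1))
      else C s(v (k-j-1), v (k-j-1+1)) := by
    intro j hj
    rcases Nat.lt_trichotomy j (k-i) with h4 | h4 | h4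
    · rw [if_pos h4]
      unfold q0fun
      rw [q0idx_le (by omega), q0idx_le (by omega)]
      rfl
    · rw [if_neg (by omega), if_pos h4]
      unfold q0fun
      rw [q0idx_le (by omega), q0idx_gt (by omega),
        show i + j = k from by omega, show k - (j+1) = i - 1 from by omega]
    · rw [if_neg (by omega), if_neg (by omega)]
      unfold q0fun
      rw [q0idx_gt (by omega), q0idx_gt (by omega),
        show k - (j+1) = k - j - 1 from by omega]
      rw [Sym2.eq_swap, show k - j - 1 + 1 = k - j from by omega]
  refine ⟨⟨?_, ?_, ?_⟩, ?_, ?_, ?_⟩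
  · intro j hj
    rcases Nat.lt_trichotomy j (k-i) with h4 | h4 | h4
    · unfold q0fun
      rw [q0idx_le (by omega), q0idx_le (by omega)]
      exact h1 (i+j) (by omega)
    · unfold q0fun
      rw [q0idx_le (by omega), q0idx_gt (by omega),
        show i + j = k from by omega, show k - (j+1) = i - 1 from by omega]
      exact hbadj
    · unfold q0fun
      rw [q0idx_gt (by omega), q0idx_gt (by omega),
        show k - (j+1) = k - j - 1 from by omega]
      have := h1 (k-j-1) (by omega)
      rw [show k - j - 1 + 1 = k - j from by omega] at this
      exact this.symm
  · intro a b ha hb hab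
    have := h2 _ _ (q0idx_bnd (by omega) ha) (q0idx_bnd (by omega) hb) hab
    unfold q0idx at this
    split_ifs at this <;> omega
  · intro a b ha hb hab
    rw [colid a ha, colid b hb] at hab
    split_ifs at hab with c1 c2 c3 c4 c5 c6 c7
    · have := h3 (i+a) (i+b) (by omega) (by omega) hab; omega
    · exact absurd hab.symm (hbS (i+a) (by omega))
    · have := h3 (i+a) (k-b-1) (by omega) (by omega) hab; omega
    · exact absurd hab (hbS (i+b) (by omega))
    · omega
    · exact absurd hab (hbS (k-b-1) (by omega))
    · have := h3 (k-a-1) (i+b) (by omega) (by omega) hab; omega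
    · exact absurd hab.symm (hbS (k-a-1) (by omega))
    · have := h3 (k-a-1) (k-b-1) (by omega) (by omega) hab; omega
  · unfold q0fun
    rw [q0idx_gt (by omega), Nat.sub_self]
  · intro j hj
    exact ⟨q0idx k i j, q0idx_bnd (by omega) hj, rfl⟩
  · intro j hj
    rw [colid j hj]
    split_ifs with h4 h5
    · exact Or.inr ⟨i+j, by omega, by omega, rfl⟩
    · exact Or.inl rfl
    · exact Or.inr ⟨k-j-1, by omega, by omega, rfl⟩

end HetAux

namespace HetAux

variable {V : Type*} {G : SimpleGraph V} {C : Sym2 V → ℕ}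

/-- The rotated spanning path ending at `v 1`:
`v 2, ..., v (i-1), v k, v (k-1), ..., v i, v 0, v 1`. -/
def q1idx (k i : ℕ) : ℕ → ℕ := fun j =>
  if j + 3 ≤ i then j + 2
  else if j ≤ k - 2 then k + i - 2 - j
  else if j = k - 1 then 0 else 1

def q1fun (v : ℕ → V) (k i : ℕ) : ℕ → V := fun j => v (q1idx k i j)

def q1cdx (k i : ℕ) : ℕ → ℕ := fun j =>
  if j + 4 ≤ i then j + 2
  else if j ≤ k - 3 then k + i - 3 - j
  else 0

theorem q1idx_bnd {k i j : ℕ} (hi2 : 2 ≤ i) (hik : i + 1 ≤ k) (hj : j ≤ k) :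
    q1idx k i j ≤ k := by
  unfold q1idx; split_ifs <;> omega

theorem q1_main {k i : ℕ} {v : ℕ → V} (hv : IsHP G C k v)
    (hi2 : 2 ≤ i) (hik : i + 1 ≤ k) (hk3 : 3 ≤ k)
    (haadj : G.Adj (v 0) (v i))
    (haS : ∀ j, j < k → C s(v 0, v i) ≠ C s(v j, v (j+1)))
    (hbadj : G.Adj (v k) (v (i-1)))
    (hbS : ∀ j, j < k → C s(v k, v (i-1)) ≠ C s(v j, v (j+1)))
    (hne : C s(v 0, v i) ≠ C s(v k, v (i-1))) :
    IsHP G C k (q1fun v k i) ∧ q1fun v k i k = v 1 ∧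
      (∀ j, j ≤ k → ∃ t, t ≤ k ∧ q1fun v k i j = v t) ∧
      (∀ j, j < k → C s(q1fun v k i j, q1fun v k i (j+1)) = C s(v 0, v i) ∨
        C s(q1fun v k i j, q1fun v k i (j+1)) = C s(v k, v (i-1)) ∨
        ∃ t, t < k ∧ t ≠ i - 1 ∧
          C s(q1fun v k i j, q1fun v k i (j+1)) = C s(v t, v (t+1))) := by
  obtain ⟨h1, h2, h3⟩ := hv
  have idx1 : ∀ j, j + 3 ≤ i → q1idx k i j = j + 2 := by
    intro j h; unfold q1idx; split_ifs <;> omega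
  have idx2 : ∀ j, ¬ (j + 3 ≤ i) → j ≤ k - 2 → q1idx k i j = k + i - 2 - j := by
    intro j h h'; unfold q1idx; split_ifs <;> omega
  have idx3 : q1idx k i (k-1) = 0 := by
    unfold q1idx; split_ifs <;> omega
  have idx4 : q1idx k i k = 1 := by
    unfold q1idx; split_ifs <;> omega
  have class1 : ∀ j, j < k →
      (C s(q1fun v k i j, q1fun v k i (j+1)) =
          C s(v (q1cdx k i j), v (q1cdx k i j + 1)) ∧
        q1cdx k i j < k ∧ q1cdx k i j ≠ i - 1 ∧ j + 3 ≠ i ∧ j ≠ k - 2) ∨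
      (j + 3 = i ∧ C s(q1fun v k i j, q1fun v k i (j+1)) = C s(v k, v (i-1))) ∨
      (j = k - 2 ∧ C s(q1fun v k i j, q1fun v k i (j+1)) = C s(v 0, v i)) := by
    intro j hj
    have hcase : j + 4 ≤ i ∨ j + 3 = i ∨ (i ≤ j + 2 ∧ j ≤ k - 3) ∨ j = k - 2 ∨ j = k - 1 := by
      omega
    rcases hcase with hc | hc | ⟨hc, hc'⟩ | hc | hc
    · refine Or.inl ⟨?_, ?_, ?_, by omega, by omega⟩
      · unfold q1fun
        rw [idx1 j (by omega), idx1 (j+1) (by omega),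
          show q1cdx k i j = j + 2 from by unfold q1cdx; split_ifs <;> omega]
      · rw [show q1cdx k i j = j + 2 from by unfold q1cdx; split_ifs <;> omega]; omega
      · rw [show q1cdx k i j = j + 2 from by unfold q1cdx; split_ifs <;> omega]; omega
    · refine Or.inr (Or.inl ⟨hc, ?_⟩)
      unfold q1fun
      rw [idx1 j (by omega), idx2 (j+1) (by omega) (by omega),
        show j + 2 = i - 1 from by omega, show k + i - 2 - (j+1) = k from by omega,
        Sym2.eq_swap]
    · refine Or.inl ⟨?_, ?_, ?_, by omega, by omega⟩
      · unfold q1fun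
        rw [idx2 j (by omega) (by omega), idx2 (j+1) (by omega) (by omega),
          show q1cdx k i j = k + i - 3 - j from by unfold q1cdx; split_ifs <;> omega,
          show k + i - 2 - (j+1) = k + i - 3 - j from by omega,
          Sym2.eq_swap, show k + i - 3 - j + 1 = k + i - 2 - j from by omega]
      · rw [show q1cdx k i j = k + i - 3 - j from by unfold q1cdx; split_ifs <;> omega]; omega
      · rw [show q1cdx k i j = k + i - 3 - j from by unfold q1cdx; split_ifs <;> omega]; omega
    · refine Or.inr (Or.inr ⟨hc, ?_⟩)
      subst hc
      unfold q1fun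
      rw [idx2 (k-2) (by omega) (by omega), show k - 2 + 1 = k - 1 from by omega, idx3,
        show k + i - 2 - (k - 2) = i from by omega, Sym2.eq_swap]
    · refine Or.inl ⟨?_, ?_, ?_, by omega, by omega⟩
      · subst hc
        unfold q1fun
        rw [show k - 1 + 1 = k from by omega, idx3, idx4,
          show q1cdx k i (k-1) = 0 from by unfold q1cdx; split_ifs <;> omega]
      · rw [show q1cdx k i j = 0 from by subst hc; unfold q1cdx; split_ifs <;> omega]; omega
      · rw [show q1cdx k i j = 0 from by subst hc; unfold q1cdx; split_ifs <;> omega]; omega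
  refine ⟨⟨?_, ?_, ?_⟩, ?_, ?_, ?_⟩
  · intro j hj
    have hcase : j + 4 ≤ i ∨ j + 3 = i ∨ (i ≤ j + 2 ∧ j ≤ k - 3) ∨ j = k - 2 ∨ j = k - 1 := by
      omega
    rcases hcase with hc | hc | ⟨hc, hc'⟩ | hc | hc
    · unfold q1fun
      rw [idx1 j (by omega), idx1 (j+1) (by omega)]
      have := h1 (j+2) (by omega)
      exact this
    · unfold q1fun
      rw [idx1 j (by omega), idx2 (j+1) (by omega) (by omega),
        show j + 2 = i - 1 from by omega, show k + i - 2 - (j+1) = k from by omega]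
      exact hbadj.symm
    · unfold q1fun
      rw [idx2 j (by omega) (by omega), idx2 (j+1) (by omega) (by omega),
        show k + i - 2 - (j+1) = k + i - 3 - j from by omega]
      have := h1 (k + i - 3 - j) (by omega)
      rw [show k + i - 3 - j + 1 = k + i - 2 - j from by omega] at this
      exact this.symm
    · subst hc
      unfold q1fun
      rw [idx2 (k-2) (by omega) (by omega), show k - 2 + 1 = k - 1 from by omega, idx3,
        show k + i - 2 - (k - 2) = i from by omega]
      exact haadj.symm
    · subst hc
      unfold q1fun
      rw [show k - 1 + 1 = k from by omega, idx3, idx4]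
      exact h1 0 (by omega)
  · intro a b ha hb hab
    have := h2 _ _ (q1idx_bnd hi2 hik ha) (q1idx_bnd hi2 hik hb) hab
    unfold q1idx at this
    split_ifs at this <;> omega
  · intro a b ha hb hab
    rcases class1 a ha with ⟨e1, t1, t2, t3, t4⟩ | ⟨hA, e1⟩ | ⟨hA, e1⟩ <;>
      rcases class1 b hb with ⟨f1, u1, u2, u3, u4⟩ | ⟨hB, f1⟩ | ⟨hB, f1⟩ <;>
      rw [e1, f1] at hab
    · have := h3 _ _ t1 u1 hab
      unfold q1cdx at this
      split_ifs at this <;> omega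
    · exact absurd hab.symm (hbS _ t1)
    · exact absurd hab.symm (haS _ t1)
    · exact absurd hab (hbS _ u1)
    · omega
    · exact absurd hab.symm hne
    · exact absurd hab (haS _ u1)
    · exact absurd hab hne
    · omega
  · unfold q1fun
    rw [idx4]
  · intro j hj
    exact ⟨q1idx k i j, q1idx_bnd hi2 hik hj, rfl⟩
  · intro j hj
    rcases class1 j hj with ⟨e1, t1, t2, _, _⟩ | ⟨_, e1⟩ | ⟨_, e1⟩
    · exact Or.inr (Or.inr ⟨q1cdx k i j, t1, t2, e1⟩)
    · exact Or.inr (Or.inl e1)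
    · exact Or.inl e1

end HetAux

open HetAux

/-- Theorem 3.1: Let `G` be an edge-colored graph with at least two vertices and
`s ≥ 4` an integer.  If `|CN(u) ∪ CN(v)| ≥ s` for every pair of distinct vertices
`u, v`, then `G` has a heterochromatic path of length at least `⌊(2s+4)/5⌋`. -/
theorem stmt7 {V : Type*} [Fintype V] (G : SimpleGraph V) (C : Sym2 V → ℕ)
    (s : ℕ) (hs : 4 ≤ s) (hcard : 2 ≤ Fintype.card V)
    (hCN : ∀ u v : V, u ≠ v → s ≤ (colorNbhd G C u ∪ colorNbhd G C v).ncard) :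
    ∃ (a b : V) (p : G.Walk a b), Heterochromatic G C p ∧
      (2 * s + 4) / 5 ≤ p.length := by
  classical
  obtain ⟨x0⟩ : Nonempty V := Fintype.card_pos_iff.mp (by omega)
  have hbdd : ∀ m : ℕ, (∃ f, IsHP G C m f) → m ≤ Fintype.card V := by
    rintro m ⟨f, hf⟩
    have := isHP_card hf
    omega
  have hHPP0 : ∃ f, IsHP G C 0 f :=
    ⟨fun _ => x0, fun j hj => absurd hj (by omega), fun a b ha hb _ => by omega,
      fun a b ha hb _ => by omega⟩
  set k := Nat.findGreatest (fun m => ∃ f, IsHP G C m f) (Fintype.card V) with hkdef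
  have hPk : ∃ f, IsHP G C k f := by
    rw [hkdef]
    exact Nat.findGreatest_spec (P := fun m => ∃ f, IsHP G C m f) (Nat.zero_le _) hHPP0
  have hmax : ∀ m, (∃ f, IsHP G C m f) → m ≤ k := by
    intro m hm
    rw [hkdef]
    exact Nat.le_findGreatest (P := fun m => ∃ f, IsHP G C m f) (hbdd m hm) hm
  obtain ⟨v, hv⟩ := hPk
  rcases le_or_gt ((2 * s + 4) / 5) k with hgood | hbad
  · obtain ⟨a, b, p, hp, hlen⟩ := isHP_het hv
    exact ⟨a, b, p, hp, by omega⟩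
  exfalso
  have h2s : 5 * k + 1 ≤ 2 * s := by
    have h5 : k + 1 ≤ (2 * s + 4) / 5 := hbad
    have := (Nat.le_div_iff_mul_le (by omega : 0 < 5)).mp h5
    omega
  have hvadj := hv.1
  have hvinj := hv.2.1
  have hvcol := hv.2.2
  have hnoext : ∀ f : ℕ → V, ¬ IsHP G C (k + 1) f := by
    intro f hf
    have := hmax (k + 1) ⟨f, hf⟩
    omega
  -- k ≥ 1
  have hk1 : 1 ≤ k := by
    obtain ⟨u, u', huu⟩ := Fintype.exists_pair_of_one_lt_card (α := V) (by omega)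
    have hcn := hCN u u' huu
    obtain ⟨γ, hγ⟩ : (colorNbhd G C u ∪ colorNbhd G C u').Nonempty :=
      Set.nonempty_of_ncard_ne_zero (s := colorNbhd G C u ∪ colorNbhd G C u') (by omega)
    have hedge : ∃ x w : V, G.Adj x w := by
      rcases hγ with h | h
      · obtain ⟨w, hw, -⟩ := h
        exact ⟨u, w, hw⟩
      · obtain ⟨w, hw, -⟩ := h
        exact ⟨u', w, hw⟩
    obtain ⟨x, w, hxw⟩ := hedge
    refine hmax 1 ⟨fun j => if j = 0 then x else w, fun j hj => ?_, fun a b ha hb hab => ?_,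
      fun a b ha hb _ => by omega⟩
    · have hj0 : j = 0 := by omega
      subst hj0
      simpa using hxw
    · have hcase : (a = 0 ∧ b = 1) ∨ (a = 1 ∧ b = 0) ∨ a = b := by omega
      rcases hcase with ⟨ha', hb'⟩ | ⟨ha', hb'⟩ | h'
      · subst ha'; subst hb'
        simp only [reduceIte, one_ne_zero, ite_false] at hab
        exact absurd hab hxw.ne
      · subst ha'; subst hb'
        simp only [reduceIte, one_ne_zero, ite_false] at hab
        exact absurd hab.symm hxw.ne
      · exact h'
  have hCNfin : ∀ u : V, (colorNbhd G C u).Finite := fun u =>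
    (Set.finite_range (fun w : V => C s(u, w))).subset
      (by rintro γ ⟨w, -, rfl⟩; exact ⟨w, rfl⟩)
  set Sset : Set ℕ := (fun j => C s(v j, v (j + 1))) '' Set.Iio k with hSdef
  have hSfin : Sset.Finite := (Set.finite_Iio k).image _
  have hScard : Sset.ncard = k := by
    rw [hSdef, Set.ncard_image_of_injOn
        (show Set.InjOn _ (Set.Iio k) from fun a ha b hb hab => hvcol a b ha hb hab),
      ← Finset.coe_range, Set.ncard_coe_finset, Finset.card_range]
  set NA : Set ℕ := colorNbhd G C (v 0) \ Sset with hNAdef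
  set NB : Set ℕ := colorNbhd G C (v k) \ Sset with hNBdef
  have hNAfin : NA.Finite := (hCNfin (v 0)).diff
  have hNBfin : NB.Finite := (hCNfin (v k)).diff
  set Img : Set V := v '' Set.Icc 0 k with hImgdef
  have hImgfin : Img.Finite := (Set.finite_Icc 0 k).image _
  -- endpoint lemmas
  have hendA : ∀ γ, γ ∈ NA → ∃ i, 2 ≤ i ∧ i ≤ k ∧ G.Adj (v 0) (v i) ∧ C s(v 0, v i) = γ := by
    intro γ hγ
    obtain ⟨⟨w, hadj, hwc⟩, hγS⟩ := hγ
    have hw : w ∈ Img := by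
      by_contra hw
      refine hnoext _ (isHP_extBeg hv hadj.symm ?_ ?_)
      · intro j hj hje
        exact hw ⟨j, Set.mem_Icc.mpr ⟨Nat.zero_le _, hj⟩, hje⟩
      · intro j hj hcj
        exact hγS ⟨j, Set.mem_Iio.mpr hj, by show C s(v j, v (j + 1)) = γ; rw [hcj, Sym2.eq_swap]; exact hwc⟩
    obtain ⟨i, hi, hiw⟩ := hw
    rw [← hiw] at hadj hwc
    have hik : i ≤ k := (Set.mem_Icc.mp hi).2
    refine ⟨i, ?_, hik, hadj, hwc⟩
    by_contra h2'
    have hcase : i = 0 ∨ i = 1 := by omega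
    rcases hcase with h' | h'
    · subst h'
      exact G.loopless.irrefl _ hadj
    · subst h'
      exact hγS ⟨0, Set.mem_Iio.mpr (by omega), hwc⟩
  have hendB : ∀ γ, γ ∈ NB → ∃ i, i ≤ k - 2 ∧ G.Adj (v k) (v i) ∧ C s(v k, v i) = γ := by
    intro γ hγ
    obtain ⟨⟨w, hadj, hwc⟩, hγS⟩ := hγ
    have hw : w ∈ Img := by
      by_contra hw
      refine hnoext _ (isHP_extEnd hv hadj ?_ ?_)
      · intro j hj hje
        exact hw ⟨j, Set.mem_Icc.mpr ⟨Nat.zero_le _, hj⟩, hje⟩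
      · intro j hj hcj
        exact hγS ⟨j, Set.mem_Iio.mpr hj, by show C s(v j, v (j + 1)) = γ; rw [hcj]; exact hwc⟩
    obtain ⟨i, hi, hiw⟩ := hw
    rw [← hiw] at hadj hwc
    have hik : i ≤ k := (Set.mem_Icc.mp hi).2
    refine ⟨i, ?_, hadj, hwc⟩
    by_contra h2'
    have hcase : i = k ∨ i = k - 1 := by omega
    rcases hcase with h' | h'
    · subst h'
      exact G.loopless.irrefl _ hadj
    · subst h'
      apply hγS
      refine ⟨k - 1, Set.mem_Iio.mpr (by omega), ?_⟩
      show C s(v (k - 1), v (k - 1 + 1)) = γ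
      rw [show k - 1 + 1 = k from by omega, Sym2.eq_swap]
      exact hwc
  -- choice functions
  have hfa' : ∀ γ : ℕ, ∃ i : ℕ, γ ∈ NA →
      2 ≤ i ∧ i ≤ k ∧ G.Adj (v 0) (v i) ∧ C s(v 0, v i) = γ := by
    intro γ
    by_cases h : γ ∈ NA
    · obtain ⟨i, h1, h2, h3, h4⟩ := hendA γ h
      exact ⟨i, fun _ => ⟨h1, h2, h3, h4⟩⟩
    · exact ⟨0, fun hh => absurd hh h⟩
  choose fA hfA using hfa'
  have hfb' : ∀ γ : ℕ, ∃ i : ℕ, γ ∈ NB →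
      i ≤ k - 2 ∧ G.Adj (v k) (v i) ∧ C s(v k, v i) = γ := by
    intro γ
    by_cases h : γ ∈ NB
    · obtain ⟨i, h1, h2, h3⟩ := hendB γ h
      exact ⟨i, fun _ => ⟨h1, h2, h3⟩⟩
    · exact ⟨0, fun hh => absurd hh h⟩
  choose fB hfB using hfb'
  set Ipos : Set ℕ := fA '' NA with hIdef
  set Jpos : Set ℕ := (fun γ => fB γ + 1) '' NB with hJdef
  have hfAinj : Set.InjOn fA NA := by
    intro γ hγ γ' hγ' he
    rw [← (hfA γ hγ).2.2.2, ← (hfA γ' hγ').2.2.2, he]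
  have hfBinj : Set.InjOn (fun γ => fB γ + 1) NB := by
    intro γ hγ γ' hγ' he
    simp only at he
    rw [← (hfB γ hγ).2.2, ← (hfB γ' hγ').2.2, show fB γ = fB γ' from by omega]
  have hIcard : Ipos.ncard = NA.ncard := Set.ncard_image_of_injOn hfAinj
  have hJcard : Jpos.ncard = NB.ncard := Set.ncard_image_of_injOn hfBinj
  have hIfin : Ipos.Finite := hNAfin.image _
  have hJfin : Jpos.Finite := hNBfin.image _
  have hIcc : ∀ a b : ℕ, (Set.Icc a b).ncard = b + 1 - a := by
    intro a b
    rw [← Finset.coe_Icc, Set.ncard_coe_finset, Nat.card_Icc]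
  have hNAb : NA.ncard + 1 ≤ k := by
    have hsub : Ipos ⊆ Set.Icc 2 k := by
      rintro i ⟨γ, hγ, rfl⟩
      exact Set.mem_Icc.mpr ⟨(hfA γ hγ).1, (hfA γ hγ).2.1⟩
    have h1 := Set.ncard_le_ncard hsub (Set.finite_Icc _ _)
    rw [hIcard, hIcc] at h1
    omega
  have hNBb0 : NB.ncard ≤ k := by
    have hsub : Jpos ⊆ Set.Icc 1 k := by
      rintro i ⟨γ, hγ, rfl⟩
      exact Set.mem_Icc.mpr ⟨by show 1 ≤ fB γ + 1; omega,
        by show fB γ + 1 ≤ k; have := (hfB γ hγ).1; omega⟩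
    have h1 := Set.ncard_le_ncard hsub (Set.finite_Icc _ _)
    rw [hJcard, hIcc] at h1
    omega
  -- the first pair bound
  have hne0k : v 0 ≠ v k := fun he => by have := hvinj 0 k (by omega) (by omega) he; omega
  have hUfin : (NA ∪ NB).Finite := hNAfin.union hNBfin
  have hpair1 : s ≤ k + (NA ∪ NB).ncard := by
    have hsub : colorNbhd G C (v 0) ∪ colorNbhd G C (v k) ⊆ Sset ∪ (NA ∪ NB) := by
      intro γ hγ
      by_cases hγS : γ ∈ Sset
      · exact Or.inl hγS
      · rcases hγ with h | h
        · exact Or.inr (Or.inl ⟨h, hγS⟩)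
        · exact Or.inr (Or.inr ⟨h, hγS⟩)
    have h1 := hCN _ _ hne0k
    have h2 := Set.ncard_le_ncard hsub (hSfin.union hUfin)
    have h3 := Set.ncard_union_le Sset (NA ∪ NB)
    omega
  have hUle : (NA ∪ NB).ncard ≤ NA.ncard + NB.ncard := Set.ncard_union_le _ _
  have hk3 : 3 ≤ k := by omega
  have hNBb : NB.ncard + 1 ≤ k := by
    have hsub : Jpos ⊆ Set.Icc 1 (k - 1) := by
      rintro i ⟨γ, hγ, rfl⟩
      exact Set.mem_Icc.mpr ⟨by show 1 ≤ fB γ + 1; omega,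
        by show fB γ + 1 ≤ k - 1; have := (hfB γ hγ).1; omega⟩
    have h1 := Set.ncard_le_ncard hsub (Set.finite_Icc _ _)
    rw [hJcard, hIcc] at h1
    omega
  have hk5 : 5 ≤ k := by omega
  -- coincidences
  set X : Set ℕ := Ipos ∩ Jpos with hXdef
  have hXfin : X.Finite := hIfin.inter_of_left _
  have hXIJ : (Ipos ∪ Jpos).ncard + X.ncard = Ipos.ncard + Jpos.ncard :=
    Set.ncard_union_add_ncard_inter _ _ hIfin hJfin
  have hIJk : (Ipos ∪ Jpos).ncard ≤ k := by
    have hsub : Ipos ∪ Jpos ⊆ Set.Icc 1 k := by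
      rintro i (⟨γ, hγ, rfl⟩ | ⟨γ, hγ, rfl⟩)
      · exact Set.mem_Icc.mpr ⟨by have := (hfA γ hγ).1; omega, (hfA γ hγ).2.1⟩
      · exact Set.mem_Icc.mpr ⟨by show 1 ≤ fB γ + 1; omega,
          by show fB γ + 1 ≤ k; have := (hfB γ hγ).1; omega⟩
    have h1 := Set.ncard_le_ncard hsub (Set.finite_Icc _ _)
    rw [hIcc] at h1
    omega
  have hXa : ∀ i ∈ X, C s(v 0, v i) ∈ NA ∧ fA (C s(v 0, v i)) = i ∧ G.Adj (v 0) (v i) := by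
    rintro i ⟨⟨γ, hγ, rfl⟩, -⟩
    rw [(hfA γ hγ).2.2.2]
    exact ⟨hγ, rfl, (hfA γ hγ).2.2.1⟩
  have hXb : ∀ i ∈ X, C s(v k, v (i - 1)) ∈ NB ∧ fB (C s(v k, v (i - 1))) + 1 = i ∧
      G.Adj (v k) (v (i - 1)) := by
    rintro i ⟨-, ⟨γ, hγ, rfl⟩⟩
    simp only
    rw [show fB γ + 1 - 1 = fB γ from by omega, (hfB γ hγ).2.2]
    exact ⟨hγ, rfl, (hfB γ hγ).2.1⟩
  have hXbnd : ∀ i ∈ X, 2 ≤ i ∧ i + 1 ≤ k := by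
    rintro i ⟨⟨γ, hγ, rfl⟩, hJ⟩
    refine ⟨(hfA γ hγ).1, ?_⟩
    obtain ⟨γ', hγ', he⟩ := hJ
    have he' : fB γ' + 1 = fA γ := he
    have := (hfB γ' hγ').1
    omega
  set Xs : Set ℕ := {i ∈ X | C s(v 0, v i) = C s(v k, v (i - 1))} with hXsdef
  set Xd : Set ℕ := {i ∈ X | C s(v 0, v i) ≠ C s(v k, v (i - 1))} with hXddef
  have hXsfin : Xs.Finite := hXfin.subset (fun i hi => hi.1)
  have hXdfin : Xd.Finite := hXfin.subset (fun i hi => hi.1)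
  have hXunion : Xd ∪ Xs = X := by
    ext i
    constructor
    · rintro (h | h) <;> exact h.1
    · intro h
      by_cases h' : C s(v 0, v i) = C s(v k, v (i - 1))
      · exact Or.inr ⟨h, h'⟩
      · exact Or.inl ⟨h, h'⟩
  have hXsplit : Xd.ncard + Xs.ncard = X.ncard := by
    rw [← hXunion]
    exact (Set.ncard_union_eq (Set.disjoint_left.mpr (fun i hi hi' => hi.2 hi'.2)) hXdfin
      hXsfin).symm
  have hXsinj : Set.InjOn (fun i => C s(v 0, v i)) X := by
    intro i hi i' hi' he
    simp only at he
    rw [← (hXa i hi).2.1, ← (hXa i' hi').2.1, he]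
  have hXscard : Xs.ncard ≤ (NA ∩ NB).ncard := by
    have h1 : (fun i => C s(v 0, v i)) '' Xs ⊆ NA ∩ NB := by
      rintro γ ⟨i, hi, rfl⟩
      simp only
      refine ⟨(hXa i hi.1).1, ?_⟩
      rw [hi.2]
      exact (hXb i hi.1).1
    have h2 := Set.ncard_le_ncard h1 (hNAfin.inter_of_left _)
    rw [Set.ncard_image_of_injOn (Set.InjOn.mono (fun i hi => hi.1) hXsinj)] at h2
    exact h2
  have hNABint : (NA ∪ NB).ncard + (NA ∩ NB).ncard = NA.ncard + NB.ncard :=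
    Set.ncard_union_add_ncard_inter _ _ hNAfin hNBfin
  have hkd : s ≤ 2 * k + Xd.ncard := by omega
  have hkd3 : 3 ≤ Xd.ncard := by omega
  -- the key color restriction for edges leaving the path at v 0 / v 1
  have hKey : ∀ y : V, y ∉ Img → ∀ i ∈ Xd,
      (G.Adj (v 0) y → C s(v 0, y) = C s(v 0, v i) ∨ C s(v 0, y) = C s(v k, v (i - 1)) ∨
        ∃ t, t < k ∧ t ≠ i - 1 ∧ C s(v 0, y) = C s(v t, v (t + 1))) ∧
      (G.Adj (v 1) y → C s(v 1, y) = C s(v 0, v i) ∨ C s(v 1, y) = C s(v k, v (i - 1)) ∨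
        ∃ t, t < k ∧ t ≠ i - 1 ∧ C s(v 1, y) = C s(v t, v (t + 1))) := by
    intro y hy i hiXd
    obtain ⟨hiX, hine⟩ := hiXd
    obtain ⟨ha1, ha2, ha3⟩ := hXa i hiX
    obtain ⟨hb1, hb2, hb3⟩ := hXb i hiX
    obtain ⟨hi2, hik⟩ := hXbnd i hiX
    have haS : ∀ j, j < k → C s(v 0, v i) ≠ C s(v j, v (j + 1)) := by
      intro j hj he
      exact ha1.2 ⟨j, Set.mem_Iio.mpr hj, he.symm⟩
    have hbS : ∀ j, j < k → C s(v k, v (i - 1)) ≠ C s(v j, v (j + 1)) := by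
      intro j hj he
      exact hb1.2 ⟨j, Set.mem_Iio.mpr hj, he.symm⟩
    obtain ⟨hq0, hq0end, hq0img, hq0col⟩ := q0_main hv hi2 hik hb3 hbS
    obtain ⟨hq1, hq1end, hq1img, hq1col⟩ :=
      q1_main hv hi2 hik (by omega) ha3 haS hb3 hbS hine
    constructor
    · intro hadj
      by_contra hcon
      push_neg at hcon
      obtain ⟨hc1, hc2, hc3⟩ := hcon
      refine hnoext _ (isHP_extEnd (y := y) hq0 ?_ ?_ ?_)
      · rw [hq0end]; exact hadj
      · intro j hj he
        obtain ⟨t, ht, hte⟩ := hq0img j hj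
        exact hy ⟨t, Set.mem_Icc.mpr ⟨Nat.zero_le _, ht⟩, by rw [← hte, he]⟩
      · intro j hj he
        rw [hq0end] at he
        rcases hq0col j hj with h | ⟨t, ht1, ht2, ht3⟩
        · rw [h] at he
          exact hc2 he.symm
        · rw [ht3] at he
          exact hc3 t ht1 ht2 he.symm
    · intro hadj
      by_contra hcon
      push_neg at hcon
      obtain ⟨hc1, hc2, hc3⟩ := hcon
      refine hnoext _ (isHP_extEnd (y := y) hq1 ?_ ?_ ?_)
      · rw [hq1end]; exact hadj
      · intro j hj he
        obtain ⟨t, ht, hte⟩ := hq1img j hj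
        exact hy ⟨t, Set.mem_Icc.mpr ⟨Nat.zero_le _, ht⟩, by rw [← hte, he]⟩
      · intro j hj he
        rw [hq1end] at he
        rcases hq1col j hj with h | h | ⟨t, ht1, ht2, ht3⟩
        · rw [h] at he
          exact hc1 he.symm
        · rw [h] at he
          exact hc2 he.symm
        · rw [ht3] at he
          exact hc3 t ht1 ht2 he.symm
  -- consequence: colors of edges leaving the path at v 0 / v 1 lie in Sset minus the removed ones
  have hLam : ∀ y x : V, y ∉ Img → x = v 0 ∨ x = v 1 → G.Adj x y →
      C s(x, y) ∈ Sset ∧ ∀ i ∈ Xd, C s(x, y) ≠ C s(v (i - 1), v (i - 1 + 1)) := by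
    intro y x hy hx hadj
    have hTi : ∀ i ∈ Xd, C s(x, y) = C s(v 0, v i) ∨ C s(x, y) = C s(v k, v (i - 1)) ∨
        ∃ t, t < k ∧ t ≠ i - 1 ∧ C s(x, y) = C s(v t, v (t + 1)) := by
      intro i hi
      rcases hx with h | h <;> subst h
      · exact (hKey y hy i hi).1 hadj
      · exact (hKey y hy i hi).2 hadj
    constructor
    · by_contra hγS
      have hdis : ∀ i ∈ Xd, C s(x, y) = C s(v 0, v i) ∨ C s(x, y) = C s(v k, v (i - 1)) := by
        intro i hi
        rcases hTi i hi with h | h | ⟨t, ht1, -, ht3⟩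
        · exact Or.inl h
        · exact Or.inr h
        · exact absurd ⟨t, Set.mem_Iio.mpr ht1, ht3.symm⟩ hγS
      obtain ⟨i1, hi1⟩ : Xd.Nonempty := Set.nonempty_of_ncard_ne_zero (by omega)
      have hd1 : (Xd \ {i1}).ncard = Xd.ncard - 1 :=
        Set.ncard_diff_singleton_of_mem hi1
      obtain ⟨i2, hi2'⟩ : (Xd \ {i1}).Nonempty := Set.nonempty_of_ncard_ne_zero (by omega)
      have hd2 : ((Xd \ {i1}) \ {i2}).ncard = (Xd \ {i1}).ncard - 1 :=
        Set.ncard_diff_singleton_of_mem hi2'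
      obtain ⟨i3, hi3'⟩ : ((Xd \ {i1}) \ {i2}).Nonempty :=
        Set.nonempty_of_ncard_ne_zero (by omega)
      obtain ⟨hi2d, hi2ne⟩ := hi2'
      obtain ⟨⟨hi3d, hi3ne1⟩, hi3ne2⟩ := hi3'
      have hne12 : i1 ≠ i2 := fun h => hi2ne (by simp [h.symm])
      have hne13 : i1 ≠ i3 := fun h => hi3ne1 (by simp [h.symm])
      have hne23 : i2 ≠ i3 := fun h => hi3ne2 (by simp [h.symm])
      have hAinj : ∀ p, p ∈ X → ∀ q, q ∈ X → C s(v 0, v p) = C s(v 0, v q) → p = q :=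
        fun p hp q hq he => hXsinj hp hq he
      have hBinj : ∀ p, p ∈ X → ∀ q, q ∈ X → C s(v k, v (p - 1)) = C s(v k, v (q - 1)) →
          p = q := by
        intro p hp q hq he
        rw [← (hXb p hp).2.1, ← (hXb q hq).2.1, he]
      rcases hdis i1 hi1 with h1 | h1 <;> rcases hdis i2 hi2d with h2 | h2 <;>
        rcases hdis i3 hi3d with h3 | h3
      · exact hne12 (hAinj i1 hi1.1 i2 hi2d.1 (by rw [← h1, ← h2]))
      · exact hne12 (hAinj i1 hi1.1 i2 hi2d.1 (by rw [← h1, ← h2]))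
      · exact hne13 (hAinj i1 hi1.1 i3 hi3d.1 (by rw [← h1, ← h3]))
      · exact hne23 (hBinj i2 hi2d.1 i3 hi3d.1 (by rw [← h2, ← h3]))
      · exact hne23 (hAinj i2 hi2d.1 i3 hi3d.1 (by rw [← h2, ← h3]))
      · exact hne13 (hBinj i1 hi1.1 i3 hi3d.1 (by rw [← h1, ← h3]))
      · exact hne12 (hBinj i1 hi1.1 i2 hi2d.1 (by rw [← h1, ← h2]))
      · exact hne12 (hBinj i1 hi1.1 i2 hi2d.1 (by rw [← h1, ← h2]))
    · intro i hi he
      rcases hTi i hi with h | h | ⟨t, ht1, ht2, ht3⟩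
      · apply (hXa i hi.1).1.2
        rw [← h, he]
        exact ⟨i - 1, Set.mem_Iio.mpr (by have := hXbnd i hi.1; omega), rfl⟩
      · apply (hXb i hi.1).1.2
        rw [← h, he]
        exact ⟨i - 1, Set.mem_Iio.mpr (by have := hXbnd i hi.1; omega), rfl⟩
      · rw [he] at ht3
        have hx1 := hvcol (i - 1) t (by have := hXbnd i hi.1; omega) ht1 ht3
        omega
  -- final counting
  set Dimg : Set ℕ := (fun i => C s(v (i - 1), v (i - 1 + 1))) '' Xd with hDdef
  have hDsub : Dimg ⊆ Sset := by
    rintro γ ⟨i, hi, rfl⟩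
    exact ⟨i - 1, Set.mem_Iio.mpr (by have := hXbnd i hi.1; omega), rfl⟩
  have hDcard : Dimg.ncard = Xd.ncard := by
    apply Set.ncard_image_of_injOn
    intro p hp q hq he
    simp only at he
    have h1 := hvcol (p - 1) (q - 1) (by have := hXbnd p hp.1; omega)
      (by have := hXbnd q hq.1; omega) he
    have h2 := (hXbnd p hp.1).1
    have h3 := (hXbnd q hq.1).1
    omega
  set Lam : Set ℕ := Sset \ Dimg with hLdef
  have hLfin : Lam.Finite := hSfin.diff
  have hLcard : Lam.ncard + Xd.ncard = k := by
    have h1 := Set.ncard_diff hDsub (hXdfin.image _)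
    rw [← hLdef] at h1
    have h2 := Set.ncard_le_ncard hDsub hSfin
    omega
  set In0 : Set ℕ := (fun u => C s(v 0, u)) '' (Img \ {v 0}) with hIn0def
  set In1 : Set ℕ := (fun u => C s(v 1, u)) '' (Img \ {v 1}) with hIn1def
  have hImgcard : Img.ncard ≤ k + 1 := by
    have h1 := Set.ncard_image_le (s := Set.Icc (0:ℕ) k) (f := v) (Set.finite_Icc _ _)
    rw [← hImgdef, hIcc] at h1
    omega
  have hIn0card : In0.ncard ≤ k := by
    have h1 := Set.ncard_image_le (s := Img \ {v 0}) (f := fun u => C s(v 0, u))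
      (hImgfin.diff)
    rw [← hIn0def] at h1
    have h2 : (Img \ {v 0}).ncard = Img.ncard - 1 :=
      Set.ncard_diff_singleton_of_mem ⟨0, Set.mem_Icc.mpr ⟨le_rfl, Nat.zero_le _⟩, rfl⟩
    omega
  have hIn1card : In1.ncard ≤ k := by
    have h1 := Set.ncard_image_le (s := Img \ {v 1}) (f := fun u => C s(v 1, u))
      (hImgfin.diff)
    rw [← hIn1def] at h1
    have h2 : (Img \ {v 1}).ncard = Img.ncard - 1 :=
      Set.ncard_diff_singleton_of_mem ⟨1, Set.mem_Icc.mpr ⟨Nat.zero_le _, by omega⟩, rfl⟩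
    omega
  have hsub0 : colorNbhd G C (v 0) ⊆ In0 ∪ Lam := by
    rintro γ ⟨w, hadj, rfl⟩
    by_cases hw : w ∈ Img
    · exact Or.inl ⟨w, ⟨hw, fun hh => hadj.ne' hh⟩, rfl⟩
    · have h1 := hLam w (v 0) hw (Or.inl rfl) hadj
      exact Or.inr ⟨h1.1, fun hD => by
        obtain ⟨i, hi, he⟩ := hD
        exact h1.2 i hi he.symm⟩
  have hsub1 : colorNbhd G C (v 1) ⊆ In1 ∪ Lam := by
    rintro γ ⟨w, hadj, rfl⟩
    by_cases hw : w ∈ Img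
    · exact Or.inl ⟨w, ⟨hw, fun hh => hadj.ne' hh⟩, rfl⟩
    · have h1 := hLam w (v 1) hw (Or.inr rfl) hadj
      exact Or.inr ⟨h1.1, fun hD => by
        obtain ⟨i, hi, he⟩ := hD
        exact h1.2 i hi he.symm⟩
  have hne01 : v 0 ≠ v 1 := fun he => by have := hvinj 0 1 (by omega) (by omega) he; omega
  have hfinal := hCN (v 0) (v 1) hne01
  have hU2 : colorNbhd G C (v 0) ∪ colorNbhd G C (v 1) ⊆ In0 ∪ (In1 ∪ Lam) := by
    rintro γ (h | h)
    · rcases hsub0 h with h' | h'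
      · exact Or.inl h'
      · exact Or.inr (Or.inr h')
    · rcases hsub1 h with h' | h'
      · exact Or.inr (Or.inl h')
      · exact Or.inr (Or.inr h')
  have hIn0fin : In0.Finite := (hImgfin.diff).image _
  have hIn1fin : In1.Finite := (hImgfin.diff).image _
  have hcount1 := Set.ncard_le_ncard hU2 (hIn0fin.union (hIn1fin.union hLfin))
  have hcount2 := Set.ncard_union_le In0 (In1 ∪ Lam)
  have hcount3 := Set.ncard_union_le In1 Lam
  omega
end

section
/- Let s ≥ 1 be an odd integer and let G_s be the complete graph on (s+3)/2 vertices, edge-colored so that any two distinct edges receive distinct colors (a rainbow coloring). Then |CN(u) ∪ CN(v)| ≥ s for every pair of distinct vertices u and v of G_s, and every heterochromatic path in G_s has length at most ⌊s/2⌋ + 1; moreover a heterochromatic path of length exactly ⌊s/2⌋ + 1 exists in G_s. -/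
open SimpleGraph

lemma ham_aux {V : Type*} [DecidableEq V] :
    ∀ (l : List V) (h : l ≠ []) (_ : l.Nodup),
    ∃ (b : V) (p : (⊤ : SimpleGraph V).Walk (l.head h) b), p.IsPath ∧ p.support = l := by
  intro l
  induction l with
  | nil => simp
  | cons x t ih =>
    intro _ hnd
    rcases t with _ | ⟨y, t⟩
    · exact ⟨x, Walk.nil, Walk.IsPath.nil, rfl⟩
    · obtain ⟨b, p, hp, hsupp⟩ := ih (by simp) hnd.of_cons
      have hxy : (⊤ : SimpleGraph V).Adj x y := by
        simp only [top_adj]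
        intro h; subst h
        exact (List.nodup_cons.mp hnd).1 (by simp)
      refine ⟨b, Walk.cons hxy p, ?_, ?_⟩
      · refine (Walk.cons_isPath_iff _ _).mpr ?_
        refine ⟨hp, ?_⟩
        show x ∉ p.support
        rw [hsupp]
        exact (List.nodup_cons.mp hnd).1
      · exact congrArg (List.cons x) hsupp

/-- For odd `s ≥ 1`, let `G_s` be the complete graph on `(s+3)/2` vertices with a
rainbow edge-coloring (distinct edges get distinct colors).  Then
`|CN(u) ∪ CN(v)| ≥ s` for all distinct vertices `u, v`, every heterochromatic path
has length at most `⌊s/2⌋ + 1`, and a heterochromatic path of length exactly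
`⌊s/2⌋ + 1` exists. -/
theorem stmt8 (s : ℕ) (hs : 1 ≤ s) (hodd : Odd s)
    (C : Sym2 (Fin ((s + 3) / 2)) → ℕ)
    (hC : ∀ e₁ ∈ (⊤ : SimpleGraph (Fin ((s + 3) / 2))).edgeSet,
          ∀ e₂ ∈ (⊤ : SimpleGraph (Fin ((s + 3) / 2))).edgeSet,
          C e₁ = C e₂ → e₁ = e₂) :
    (∀ u v : Fin ((s + 3) / 2), u ≠ v →
      s ≤ (colorNbhd (⊤ : SimpleGraph (Fin ((s + 3) / 2))) C u ∪
           colorNbhd (⊤ : SimpleGraph (Fin ((s + 3) / 2))) C v).ncard) ∧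
    (∀ (a b : Fin ((s + 3) / 2)) (p : (⊤ : SimpleGraph (Fin ((s + 3) / 2))).Walk a b),
      Heterochromatic ⊤ C p → p.length ≤ s / 2 + 1) ∧
    (∃ (a b : Fin ((s + 3) / 2)) (p : (⊤ : SimpleGraph (Fin ((s + 3) / 2))).Walk a b),
      Heterochromatic ⊤ C p ∧ p.length = s / 2 + 1) := by
  obtain ⟨k, hk⟩ := hodd
  have hnk : (s + 3) / 2 = k + 2 := by omega
  have hcard : Fintype.card (Fin ((s + 3) / 2)) = (s + 3) / 2 := Fintype.card_fin _
  refine ⟨?_, ?_, ?_⟩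
  · -- color neighborhood bound
    intro u v huv
    classical
    set S₁ : Finset ℕ := (Finset.univ.erase u).image (fun w => C s(u, w)) with hS₁
    set S₂ : Finset ℕ := ((Finset.univ.erase u).erase v).image (fun w => C s(v, w)) with hS₂
    have hedge : ∀ (a b : Fin ((s + 3) / 2)), a ≠ b →
        s(a, b) ∈ (⊤ : SimpleGraph (Fin ((s + 3) / 2))).edgeSet := by
      intro a b hab; rw [mem_edgeSet]; exact hab
    have hcard₁ : S₁.card = (s + 3) / 2 - 1 := by
      rw [hS₁, Finset.card_image_of_injOn, Finset.card_erase_of_mem (Finset.mem_univ u),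
        Finset.card_univ, hcard]
      intro w hw w' hw' hww
      have h1 := hC _ (hedge u w (Ne.symm (Finset.ne_of_mem_erase hw)))
        _ (hedge u w' (Ne.symm (Finset.ne_of_mem_erase hw'))) hww
      rcases Sym2.eq_iff.mp h1 with ⟨_, h⟩ | ⟨h, h'⟩
      · exact h
      · exact h'.trans h
    have hcard₂ : S₂.card = (s + 3) / 2 - 2 := by
      rw [hS₂, Finset.card_image_of_injOn, Finset.card_erase_of_mem
        (Finset.mem_erase.mpr ⟨Ne.symm huv, Finset.mem_univ v⟩),
        Finset.card_erase_of_mem (Finset.mem_univ u), Finset.card_univ, hcard]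
      · omega
      intro w hw w' hw' hww
      have h1 := hC _ (hedge v w (Ne.symm (Finset.ne_of_mem_erase hw)))
        _ (hedge v w' (Ne.symm (Finset.ne_of_mem_erase hw'))) hww
      rcases Sym2.eq_iff.mp h1 with ⟨_, h⟩ | ⟨h, h'⟩
      · exact h
      · exact h'.trans h
    have hdisj : Disjoint S₁ S₂ := by
      rw [Finset.disjoint_left]
      intro c hc1 hc2
      rw [hS₁, Finset.mem_image] at hc1
      rw [hS₂, Finset.mem_image] at hc2
      obtain ⟨w, hw, hcw⟩ := hc1
      obtain ⟨w', hw', hcw'⟩ := hc2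
      have hw'u : w' ≠ u := Finset.ne_of_mem_erase (Finset.mem_of_mem_erase hw')
      have hw'v : w' ≠ v := Finset.ne_of_mem_erase hw'
      have h1 := hC _ (hedge u w (Ne.symm (Finset.ne_of_mem_erase hw)))
        _ (hedge v w' (Ne.symm hw'v)) (hcw.trans hcw'.symm)
      rcases Sym2.eq_iff.mp h1 with ⟨h, _⟩ | ⟨h, _⟩
      · exact huv h
      · exact hw'u h.symm
    have hsub : ((S₁ ∪ S₂ : Finset ℕ) : Set ℕ) ⊆
        colorNbhd (⊤ : SimpleGraph (Fin ((s + 3) / 2))) C u ∪ colorNbhd (⊤ : SimpleGraph (Fin ((s + 3) / 2))) C v := by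
      intro c hc
      simp only [Finset.coe_union, Set.mem_union, Finset.mem_coe] at hc
      rcases hc with hc | hc
      · rw [hS₁, Finset.mem_image] at hc
        obtain ⟨w, hw, hcw⟩ := hc
        exact Or.inl ⟨w, Ne.symm (Finset.ne_of_mem_erase hw), hcw⟩
      · rw [hS₂, Finset.mem_image] at hc
        obtain ⟨w, hw, hcw⟩ := hc
        exact Or.inr ⟨w, Ne.symm (Finset.ne_of_mem_erase hw), hcw⟩
    have hfin : (colorNbhd (⊤ : SimpleGraph (Fin ((s + 3) / 2))) C u ∪
        colorNbhd (⊤ : SimpleGraph (Fin ((s + 3) / 2))) C v).Finite := by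
      apply Set.Finite.subset (Set.finite_range C)
      rintro c (⟨w, _, hw⟩ | ⟨w, _, hw⟩) <;> exact ⟨_, hw⟩
    have hle := Set.ncard_le_ncard hsub hfin
    rw [Set.ncard_coe_finset, Finset.card_union_of_disjoint hdisj, hcard₁, hcard₂] at hle
    omega
  · -- upper bound on path lengths
    intro a b p hp
    have := hp.1.length_lt
    rw [hcard] at this
    omega
  · -- existence of a Hamiltonian heterochromatic path
    classical
    have hne : (List.finRange ((s + 3) / 2)) ≠ [] := by
      rw [← List.length_pos_iff_ne_nil, List.length_finRange]; omega
    obtain ⟨b, p, hp, hsupp⟩ := ham_aux (V := Fin ((s + 3) / 2)) (List.finRange ((s + 3) / 2)) hne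
      (List.nodup_finRange _)
    refine ⟨_, b, p, ⟨hp, ?_⟩, ?_⟩
    · apply List.Nodup.map_on _ hp.edges_nodup
      intro e he e' he' hee
      exact hC _ (p.edges_subset_edgeSet he) _ (p.edges_subset_edgeSet he') hee
    · have hlen : p.support.length = p.length + 1 := Walk.length_support p
      rw [hsupp, List.length_finRange] at hlen
      omega
end

section
/- Let s ≥ 2 be an even integer and let G_s be the graph obtained from the complete graph on (s+4)/2 vertices by deleting one edge, edge-colored so that any two distinct edges receive distinct colors (a rainbow coloring). Then |CN(u) ∪ CN(v)| ≥ s for every pair of distinct vertices u and v of G_s, and every heterochromatic path in G_s has length at most ⌊s/2⌋ + 1; moreover a heterochromatic path of length exactly ⌊s/2⌋ + 1 exists in G_s. -/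
open SimpleGraph

private lemma walk_of_chain9 {V : Type*} {G : SimpleGraph V} (a : V) (l : List V)
    (h : List.Chain G.Adj a l) : ∃ p : G.Walk a (l.getLastD a), p.support = a :: l := by
  induction l generalizing a with
  | nil => exact ⟨.nil, rfl⟩
  | cons b l ih =>
    obtain ⟨hab, hch⟩ := List.chain_cons.mp h
    obtain ⟨p, hp⟩ := ih b hch
    refine ⟨(SimpleGraph.Walk.cons hab p).copy rfl (by rw [List.getLastD_cons]), ?_⟩
    rw [SimpleGraph.Walk.support_copy, SimpleGraph.Walk.support_cons, hp]

private lemma chain'_of_nodup9 {V : Type*} {G : SimpleGraph V} {l : List V}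
    (hnd : l.Nodup) (h : ∀ a ∈ l, ∀ b ∈ l, a ≠ b → G.Adj a b) : l.Chain' G.Adj :=
  (hnd.imp_of_mem fun ha hb hne => h _ ha _ hb hne).isChain

/-- For even `s ≥ 2`, let `G_s` be the graph obtained from the complete graph on
`(s+4)/2` vertices by deleting one edge, with a rainbow edge-coloring (distinct
edges get distinct colors).  Then `|CN(u) ∪ CN(v)| ≥ s` for all distinct vertices
`u, v`, every heterochromatic path has length at most `⌊s/2⌋ + 1`, and a
heterochromatic path of length exactly `⌊s/2⌋ + 1` exists. -/
theorem stmt9 (s : ℕ) (hs : 2 ≤ s) (heven : Even s)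
    (x y : Fin ((s + 4) / 2)) (hxy : x ≠ y)
    (G : SimpleGraph (Fin ((s + 4) / 2)))
    (hG : G = (⊤ : SimpleGraph (Fin ((s + 4) / 2))).deleteEdges {s(x, y)})
    (C : Sym2 (Fin ((s + 4) / 2)) → ℕ)
    (hC : ∀ e₁ ∈ G.edgeSet, ∀ e₂ ∈ G.edgeSet, C e₁ = C e₂ → e₁ = e₂) :
    (∀ u v : Fin ((s + 4) / 2), u ≠ v →
      s ≤ (colorNbhd G C u ∪ colorNbhd G C v).ncard) ∧
    (∀ (a b : Fin ((s + 4) / 2)) (p : G.Walk a b),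
      Heterochromatic G C p → p.length ≤ s / 2 + 1) ∧
    (∃ (a b : Fin ((s + 4) / 2)) (p : G.Walk a b),
      Heterochromatic G C p ∧ p.length = s / 2 + 1) := by
  classical
  obtain ⟨k, hk⟩ := heven
  have hk1 : 1 ≤ k := by omega
  have hnval : (s + 4) / 2 = k + 2 := by omega
  have hcard : Fintype.card (Fin ((s + 4) / 2)) = k + 2 := by
    rw [Fintype.card_fin, hnval]
  -- adjacency characterization
  have hadj : ∀ u v : Fin ((s + 4) / 2), G.Adj u v ↔ u ≠ v ∧ ¬(s(u, v) = s(x, y)) := by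
    intro u v
    rw [hG, SimpleGraph.deleteEdges_adj]
    simp [SimpleGraph.top_adj]
  have hxy' : ¬ G.Adj x y := by
    rw [hadj]; simp
  -- degrees
  have hdeg1 : ∀ u, u ≠ x → u ≠ y → G.degree u = k + 1 := by
    intro u hux huy
    have huniv : G.neighborFinset u = Finset.univ.erase u := by
      ext w
      simp only [SimpleGraph.mem_neighborFinset, Finset.mem_erase, Finset.mem_univ, and_true]
      rw [hadj]
      constructor
      · rintro ⟨h1, _⟩; exact fun h => h1 h.symm
      · intro h
        refine ⟨fun h' => h h'.symm, ?_⟩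
        rw [Sym2.eq_iff]
        rintro (⟨h3, h4⟩ | ⟨h3, h4⟩) <;> simp_all
    rw [SimpleGraph.degree, huniv, Finset.card_erase_of_mem (Finset.mem_univ u),
      Finset.card_univ, hcard]
    omega
  have hdegx : G.degree x = k := by
    have huniv : G.neighborFinset x = (Finset.univ.erase x).erase y := by
      ext w
      simp only [SimpleGraph.mem_neighborFinset, Finset.mem_erase, Finset.mem_univ, and_true]
      rw [hadj]
      constructor
      · rintro ⟨h1, h2⟩
        refine ⟨fun h => h2 (by rw [h]), fun h => h1 h.symm⟩
      · rintro ⟨h1, h2⟩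
        refine ⟨fun h => h2 h.symm, ?_⟩
        rw [Sym2.eq_iff]
        rintro (⟨h3, h4⟩ | ⟨h3, h4⟩) <;> simp_all
    rw [SimpleGraph.degree, huniv,
      Finset.card_erase_of_mem (by simp [Finset.mem_erase, Ne.symm hxy]),
      Finset.card_erase_of_mem (Finset.mem_univ x), Finset.card_univ, hcard]
    omega
  have hdegy : G.degree y = k := by
    have huniv : G.neighborFinset y = (Finset.univ.erase y).erase x := by
      ext w
      simp only [SimpleGraph.mem_neighborFinset, Finset.mem_erase, Finset.mem_univ, and_true]
      rw [hadj]
      constructor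
      · rintro ⟨h1, h2⟩
        refine ⟨fun h => h2 (by rw [h, Sym2.eq_swap]), fun h => h1 h.symm⟩
      · rintro ⟨h1, h2⟩
        refine ⟨fun h => h2 h.symm, ?_⟩
        rw [Sym2.eq_iff]
        rintro (⟨h3, h4⟩ | ⟨h3, h4⟩) <;> simp_all
    rw [SimpleGraph.degree, huniv,
      Finset.card_erase_of_mem (by simp [Finset.mem_erase, hxy]),
      Finset.card_erase_of_mem (Finset.mem_univ y), Finset.card_univ, hcard]
    omega
  have hdeglb : ∀ u, k ≤ G.degree u := by
    intro u
    by_cases hux : u = x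
    · rw [hux, hdegx]
    by_cases huy : u = y
    · rw [huy, hdegy]
    · rw [hdeg1 u hux huy]; omega
  -- colorNbhd as image of incidence set
  have hCNs : ∀ u, colorNbhd G C u = C '' ↑(G.incidenceFinset u) := by
    intro u
    ext c
    simp only [colorNbhd, Set.mem_setOf_eq, Set.mem_image, Finset.mem_coe,
      SimpleGraph.mem_incidenceFinset]
    constructor
    · rintro ⟨w, hw, rfl⟩
      exact ⟨s(u, w), (SimpleGraph.mem_incidenceSet G u w).mpr hw, rfl⟩
    · rintro ⟨e, he, rfl⟩
      induction e with
      | h a b =>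
        rcases (SimpleGraph.mk'_mem_incidenceSet_iff G).mp he with ⟨hab, (rfl | rfl)⟩
        · exact ⟨b, hab, rfl⟩
        · exact ⟨a, hab.symm, by rw [Sym2.eq_swap]⟩
  refine ⟨?_, ?_, ?_⟩
  · -- part 1
    intro u v huv
    have hunion : colorNbhd G C u ∪ colorNbhd G C v
        = C '' ↑(G.incidenceFinset u ∪ G.incidenceFinset v) := by
      rw [hCNs u, hCNs v, Finset.coe_union, Set.image_union]
    rw [hunion]
    have hsub : ↑(G.incidenceFinset u ∪ G.incidenceFinset v) ⊆ G.edgeSet := by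
      intro e he
      rcases Finset.mem_union.mp (Finset.mem_coe.mp he) with h | h
      · exact ((SimpleGraph.mem_incidenceFinset G u e).mp h).1
      · exact ((SimpleGraph.mem_incidenceFinset G v e).mp h).1
    rw [Set.ncard_image_of_injOn (fun e₁ h₁ e₂ h₂ h => hC e₁ (hsub h₁) e₂ (hsub h₂) h),
      Set.ncard_coe_finset]
    have hinter : (G.incidenceFinset u ∩ G.incidenceFinset v) ⊆ {s(u, v)} := by
      intro e he
      rw [Finset.mem_inter, SimpleGraph.mem_incidenceFinset,
        SimpleGraph.mem_incidenceFinset] at he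
      rw [Finset.mem_singleton]
      exact (Sym2.mem_and_mem_iff huv).mp ⟨he.1.2, he.2.2⟩
    have hcards := Finset.card_union_add_card_inter (G.incidenceFinset u) (G.incidenceFinset v)
    rw [SimpleGraph.card_incidenceFinset_eq_degree,
      SimpleGraph.card_incidenceFinset_eq_degree] at hcards
    by_cases hxyuv : s(u, v) = s(x, y)
    · have hempty : G.incidenceFinset u ∩ G.incidenceFinset v = ∅ := by
        refine Finset.eq_empty_of_forall_notMem fun e he => ?_
        have he' := Finset.mem_singleton.mp (hinter he)
        have hmem := (Finset.mem_inter.mp he).1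
        rw [SimpleGraph.mem_incidenceFinset] at hmem
        have hE : e ∈ G.edgeSet := hmem.1
        rw [he', hxyuv, SimpleGraph.mem_edgeSet] at hE
        exact hxy' hE
      rw [hempty] at hcards
      have hdu := hdeglb u
      have hdv := hdeglb v
      simp only [Finset.card_empty] at hcards
      omega
    · have hic : (G.incidenceFinset u ∩ G.incidenceFinset v).card ≤ 1 := by
        calc _ ≤ ({s(u, v)} : Finset _).card := Finset.card_le_card hinter
        _ = 1 := Finset.card_singleton _
      have hone : (u ≠ x ∧ u ≠ y) ∨ (v ≠ x ∧ v ≠ y) := by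
        by_contra h
        push_neg at h
        obtain ⟨h1, h2⟩ := h
        have hu : u = x ∨ u = y := by
          rcases Classical.em (u = x) with h | h
          · exact Or.inl h
          · exact Or.inr (h1 h)
        have hv : v = x ∨ v = y := by
          rcases Classical.em (v = x) with h | h
          · exact Or.inl h
          · exact Or.inr (h2 h)
        rcases hu with hu | hu <;> rcases hv with hv | hv
        · exact huv (hu.trans hv.symm)
        · exact hxyuv (by rw [hu, hv])
        · exact hxyuv (by rw [hu, hv, Sym2.eq_swap])
        · exact huv (hu.trans hv.symm)
      rcases hone with ⟨h1, h2⟩ | ⟨h1, h2⟩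
      · have hdu := hdeg1 u h1 h2
        have hdv := hdeglb v
        omega
      · have hdv := hdeg1 v h1 h2
        have hdu := hdeglb u
        omega
  · -- part 2
    intro a b p hp
    have hlt := hp.1.length_lt
    rw [hcard] at hlt
    omega
  · -- part 3
    set others : List (Fin ((s + 4) / 2)) := (Finset.univ \ {x, y}).toList with hothers
    have hmem : ∀ w ∈ others, w ≠ x ∧ w ≠ y := by
      intro w hw
      rw [hothers, Finset.mem_toList, Finset.mem_sdiff, Finset.mem_insert,
        Finset.mem_singleton] at hw
      exact ⟨fun h => hw.2 (Or.inl h), fun h => hw.2 (Or.inr h)⟩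
    have hondup : others.Nodup := Finset.nodup_toList _
    have holen : others.length = k := by
      rw [hothers, Finset.length_toList, Finset.card_sdiff_of_subset (by simp),
        Finset.card_univ, hcard, Finset.card_insert_of_notMem (by simp [hxy]),
        Finset.card_singleton]
      omega
    have hone : others ≠ [] := by
      intro h
      rw [h] at holen
      simp at holen
      omega
    have hxnot : x ∉ others := fun h => (hmem x h).1 rfl
    have hynot : y ∉ others := fun h => (hmem y h).2 rfl
    have hchain : List.Chain' G.Adj ((y :: others) ++ [x]) := by
      show List.IsChain G.Adj _
      rw [List.isChain_append]
      refine ⟨?_, List.isChain_singleton x, ?_⟩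
      · refine chain'_of_nodup9 (List.nodup_cons.mpr ⟨hynot, hondup⟩) ?_
        intro a ha b hb hab
        have hax : a ≠ x := by
          rcases List.mem_cons.mp ha with rfl | h
          · exact Ne.symm hxy
          · exact (hmem a h).1
        have hbx : b ≠ x := by
          rcases List.mem_cons.mp hb with rfl | h
          · exact Ne.symm hxy
          · exact (hmem b h).1
        rw [hadj]
        refine ⟨hab, ?_⟩
        rw [Sym2.eq_iff]
        rintro (⟨h3, h4⟩ | ⟨h3, h4⟩)
        · exact hax h3
        · exact hbx h4
      · intro a ha c hc
        rw [List.head?_cons, Option.mem_some_iff] at hc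
        subst hc
        rw [List.getLast?_eq_getLast (List.cons_ne_nil _ _), Option.mem_some_iff] at ha
        have halast : a = others.getLast hone := by
          rw [← ha, List.getLast_cons hone]
        have hamem : a ∈ others := halast ▸ List.getLast_mem hone
        have hax : a ≠ x := (hmem a hamem).1
        have hay : a ≠ y := (hmem a hamem).2
        rw [hadj]
        refine ⟨hax, ?_⟩
        rw [Sym2.eq_iff]
        rintro (⟨h3, h4⟩ | ⟨h3, h4⟩)
        · exact hax h3
        · exact hay h3
    have hchain2 : List.Chain G.Adj y (others ++ [x]) := by
      rw [List.cons_append] at hchain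
      exact hchain
    obtain ⟨p, hp⟩ := walk_of_chain9 y (others ++ [x]) hchain2
    have hlast : (others ++ [x]).getLastD y = x := by
      simp
    have hLnodup : (y :: (others ++ [x])).Nodup := by
      rw [List.nodup_cons, List.nodup_append]
      refine ⟨?_, hondup, List.nodup_singleton x, ?_⟩
      · rw [List.mem_append, List.mem_singleton]
        rintro (h | h)
        · exact hynot h
        · exact hxy (h.symm)
      · intro a ha b hb
        rw [List.mem_singleton] at hb
        subst hb
        exact fun h => hxnot (h ▸ ha)
    have hpath : p.IsPath := by
      rw [SimpleGraph.Walk.isPath_def, hp]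
      exact hLnodup
    have hlen : p.length = s / 2 + 1 := by
      have h1 : p.support.length = p.length + 1 := SimpleGraph.Walk.length_support p
      rw [hp] at h1
      simp [holen] at h1
      omega
    refine ⟨y, (others ++ [x]).getLastD y, p, ⟨hpath, ?_⟩, hlen⟩
    exact List.Nodup.map_on
      (fun e₁ h₁ e₂ h₂ h => hC e₁ (p.edges_subset_edgeSet h₁) e₂ (p.edges_subset_edgeSet h₂) h)
      hpath.edges_nodup
end
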